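/- arXiv:1808.00753 — 4 statements merged into one kernel-verified Lean document; each statement's English description precedes it below -/
import Mathlib

section
/- Let Ω ⊂ ℝ^N be a bounded open set contained in the strip [0,d] × ℝ^{N-1}, and let M be a Musielak Φ-function such that for every t ≥ 0 the partial map x₁ ∈ [0,d] ↦ M((x₁,x'),t) is non-increasing. Then for every u ∈ C_c^∞(Ω), ∫_Ω M(x,|u(x)|) dx ≤ ∫_Ω M(x, d·|∂₁u(x)|) dx, where ∂₁u denotes the partial derivative of u in the first coordinate. -/
open MeasureTheory Filter Set

noncomputable def partialDeriv1 {N : ℕ} [NeZero N] (u : (Fin N → ℝ) → ℝ)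
    (x : Fin N → ℝ) : ℝ :=
  fderiv ℝ u x (Pi.single 0 1)

/-- A Musielak `Φ`-function on `ℝ^N`. -/
def IsMusielakPhi {N : ℕ} (M : (Fin N → ℝ) → ℝ → ℝ) : Prop :=
  (∀ x, MonotoneOn (M x) (Ici 0)) ∧
  (∀ x, ConvexOn ℝ (Ici 0) (M x)) ∧
  (∀ x, M x 0 = 0) ∧
  (∀ x s, 0 < s → 0 < M x s) ∧
  (∀ s, 0 ≤ s → Measurable fun x => M x s) ∧
  (∀ x, Tendsto (fun s => M x s) atTop atTop) ∧
  (∀ x, Tendsto (fun s => M x s / s) (nhdsWithin 0 (Ioi 0)) (nhds 0)) ∧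
  (∀ x, Tendsto (fun s => M x s / s) atTop atTop)

lemma musielak_contOn {N : ℕ} {M : (Fin N → ℝ) → ℝ → ℝ} (hM : IsMusielakPhi M)
    (x : Fin N → ℝ) : ContinuousOn (M x) (Ici 0) := by
  obtain ⟨h1, h2, h3, h4, h5, h6, h7, h8⟩ := hM
  have hIoi : ContinuousOn (M x) (Ioi 0) :=
    ((h2 x).subset Ioi_subset_Ici_self (convex_Ioi 0)).continuousOn isOpen_Ioi
  intro t ht
  rcases eq_or_lt_of_le (mem_Ici.mp ht) with h | h
  · -- t = 0
    subst h
    rw [ContinuousWithinAt, h3 x]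
    have hsub : Ici (0:ℝ) ⊆ {0} ∪ Ioi 0 := by
      intro s hs
      rcases eq_or_lt_of_le (mem_Ici.mp hs) with h | h
      · exact Or.inl (by simp [← h])
      · exact Or.inr h
    refine Tendsto.mono_left ?_ (nhdsWithin_mono _ hsub)
    rw [nhdsWithin_union]
    refine Tendsto.sup ?_ ?_
    · refine Tendsto.congr' ?_ tendsto_const_nhds
      filter_upwards [self_mem_nhdsWithin] with s hs
      rw [mem_singleton_iff] at hs; rw [hs, h3 x]
    · have : Tendsto (fun s => (M x s / s) * s) (nhdsWithin 0 (Ioi 0)) (nhds 0) := by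
        have := (h7 x).mul (tendsto_nhdsWithin_of_tendsto_nhds tendsto_id)
        simpa using this
      refine Tendsto.congr' ?_ this
      filter_upwards [self_mem_nhdsWithin] with s hs
      exact div_mul_cancel₀ _ (ne_of_gt hs)
  · exact ((hIoi t h).continuousAt (Ioi_mem_nhds h)).continuousWithinAt

lemma musielak_nonneg {N : ℕ} {M : (Fin N → ℝ) → ℝ → ℝ} (hM : IsMusielakPhi M)
    (x : Fin N → ℝ) {s : ℝ} (hs : 0 ≤ s) : 0 ≤ M x s := by
  rcases eq_or_lt_of_le hs with h | h
  · rw [← h, hM.2.2.1 x]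
  · exact (hM.2.2.2.1 x s h).le

lemma musielak_measurable_uncurry {N : ℕ} {M : (Fin N → ℝ) → ℝ → ℝ}
    (hM : IsMusielakPhi M) :
    Measurable (Function.uncurry fun (s : ℝ) (x : Fin N → ℝ) => M x (max s 0)) := by
  refine measurable_uncurry_of_continuous_of_measurable ?_ ?_
  · intro x
    exact (musielak_contOn hM x).comp_continuous
      (continuous_id.max continuous_const) (fun s => mem_Ici.mpr (le_max_right _ _))
  · intro s
    exact hM.2.2.2.2.1 (max s 0) (le_max_right _ _)

lemma musielak_meas_comp {N : ℕ} {M : (Fin N → ℝ) → ℝ → ℝ} (hM : IsMusielakPhi M)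
    {f : (Fin N → ℝ) → ℝ} (hf : Measurable f) (hf0 : ∀ x, 0 ≤ f x) :
    Measurable fun x => ENNReal.ofReal (M x (f x)) := by
  have : (fun x => M x (f x))
      = (Function.uncurry fun (s : ℝ) (x : Fin N → ℝ) => M x (max s 0)) ∘
        (fun x => (f x, x)) := by
    funext x; simp [Function.uncurry, max_eq_left (hf0 x)]
  exact ENNReal.measurable_ofReal.comp
    (this ▸ (musielak_measurable_uncurry hM).comp (hf.prodMk measurable_id))
open scoped ENNReal

lemma line_key (d : ℝ) (hd : 0 < d) (Mf : ℝ → ℝ → ℝ)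
    (hmonoS : ∀ t, MonotoneOn (Mf t) (Ici 0))
    (hconv : ∀ t, ConvexOn ℝ (Ici 0) (Mf t))
    (h0 : ∀ t, Mf t 0 = 0)
    (hcont : ∀ t, ContinuousOn (Mf t) (Ici 0))
    (hmonoT : ∀ s, 0 ≤ s → ∀ t t', t ∈ Icc 0 d → t' ∈ Icc 0 d → t ≤ t' →
      Mf t' s ≤ Mf t s)
    (g g' : ℝ → ℝ) (hg' : Continuous g')
    (hrep : ∀ a, a ∈ Icc 0 d → |g a| ≤ ∫ t in Ioc 0 a, |g' t|)
    (hzero : ∀ a, a ∉ Icc 0 d → g a = 0)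
    (hmeasφ : Measurable fun a => Mf a (d * |g' a|)) :
    ∫⁻ a, ENNReal.ofReal (Mf a |g a|) ≤ ∫⁻ a, ENNReal.ofReal (Mf a (d * |g' a|)) := by
  have hnn : ∀ t s, 0 ≤ s → 0 ≤ Mf t s := by
    intro t s hs
    have := hmonoS t (mem_Ici.mpr le_rfl) (mem_Ici.mpr hs) hs
    rwa [h0 t] at this
  set φ : ℝ → ℝ := fun t => Mf t (d * |g' t|) with hφ
  have hφ0 : ∀ t, 0 ≤ φ t := fun t => hnn t _ (by positivity)
  by_cases hint : IntegrableOn φ (Ioc 0 d) volume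
  · -- integrable case
    set R : ℝ := ∫ t in Ioc 0 d, φ t with hR
    have hR0 : 0 ≤ R := setIntegral_nonneg measurableSet_Ioc fun t _ => hφ0 t
    have hpt : ∀ a ∈ Icc 0 d, Mf a |g a| ≤ R / d := by
      intro a ha
      rcases eq_or_lt_of_le ha.1 with h0a | h0a
      · obtain rfl : a = 0 := h0a.symm
        have h1 : |g 0| ≤ 0 := by simpa using hrep 0 ha
        have hga : g 0 = 0 := abs_eq_zero.mp (le_antisymm h1 (abs_nonneg _))
        rw [hga, abs_zero, h0 0]
        positivity
      · set μa := volume.restrict (Ioc 0 a) with hμa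
        haveI : IsFiniteMeasure μa := by
          constructor
          rw [hμa, Measure.restrict_apply_univ, Real.volume_Ioc]
          exact ENNReal.ofReal_lt_top
        haveI : NeZero μa := by
          constructor
          rw [hμa, Ne, Measure.restrict_eq_zero, Real.volume_Ioc]
          simp only [ENNReal.ofReal_eq_zero, not_le]
          linarith
        set f : ℝ → ℝ := fun t => d * |g' t| with hf
        have hf_cont : Continuous f := continuous_const.mul hg'.abs
        have hf_int : Integrable f μa := hf_cont.integrableOn_Ioc
        have hgf_cont : Continuous fun t => Mf a (f t) :=
          (hcont a).comp_continuous hf_cont fun t => mem_Ici.mpr (by positivity)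
        have hgf_int : Integrable (fun t => Mf a (f t)) μa := by
          refine Integrable.mono (hint.mono_set (Ioc_subset_Ioc_right ha.2))
            hgf_cont.aestronglyMeasurable ?_
          filter_upwards [ae_restrict_mem measurableSet_Ioc] with t ht
          rw [Real.norm_eq_abs, Real.norm_eq_abs, abs_of_nonneg (hnn a _ (by positivity)),
            abs_of_nonneg (hφ0 t)]
          exact hmonoT (f t) (by positivity) t a ⟨ht.1.le, ht.2.trans ha.2⟩ ha ht.2
        have hjen := (hconv a).map_average_le (hcont a) isClosed_Ici
          (Eventually.of_forall fun t => mem_Ici.mpr (by positivity : (0:ℝ) ≤ f t))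
          hf_int hgf_int
        -- compute the averages
        have hμuniv : (μa univ).toReal = a := by
          rw [hμa, Measure.restrict_apply_univ, Real.volume_Ioc, sub_zero,
            ENNReal.toReal_ofReal h0a.le]
        set F : ℝ := ∫ t in Ioc 0 a, |g' t| with hF
        have hF0 : 0 ≤ F := setIntegral_nonneg measurableSet_Ioc fun t _ => abs_nonneg _
        have havg_f : ⨍ t, f t ∂μa = (d / a) * F := by
          rw [average_eq, measureReal_def, hμuniv, smul_eq_mul]
          have : ∫ t, f t ∂μa = d * F := by
            rw [hf, hF, hμa, integral_const_mul]
          rw [this]; ring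
        have havg_g : ⨍ t, Mf a (f t) ∂μa = a⁻¹ * ∫ t in Ioc 0 a, Mf a (f t) := by
          rw [average_eq, measureReal_def, hμuniv, smul_eq_mul, hμa]
        have hintR : ∫ t in Ioc 0 a, Mf a (f t) ≤ R := by
          have h1 : ∫ t in Ioc 0 a, Mf a (f t) ≤ ∫ t in Ioc 0 a, φ t := by
            refine setIntegral_mono_on hgf_int
              (hint.mono_set (Ioc_subset_Ioc_right ha.2)) measurableSet_Ioc ?_
            intro t ht
            exact hmonoT (f t) (by positivity) t a ⟨ht.1.le, ht.2.trans ha.2⟩ ha ht.2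
          have h2 : ∫ t in Ioc 0 a, φ t ≤ R := by
            rw [hR]
            exact setIntegral_mono_set hint (Eventually.of_forall fun t => hφ0 t)
              (HasSubset.Subset.eventuallyLE (Ioc_subset_Ioc_right ha.2))
          linarith
        -- chain
        have step1 : Mf a |g a| ≤ Mf a F :=
          hmonoS a (mem_Ici.mpr (abs_nonneg _)) (mem_Ici.mpr hF0) (hrep a ha)
        have step2 : Mf a F ≤ (a / d) * Mf a ((d / a) * F) := by
          have hc := (hconv a).2 (mem_Ici.mpr (by positivity : (0:ℝ) ≤ (d / a) * F))
            (mem_Ici.mpr le_rfl) (by positivity : (0:ℝ) ≤ a / d)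
            (sub_nonneg.mpr ((div_le_one hd).mpr ha.2))
            (by ring)
          have harg : (a / d) • ((d / a) * F) + (1 - a / d) • (0:ℝ) = F := by
            field_simp
            rw [smul_eq_mul, smul_zero, add_zero, div_mul_div_comm,
              div_eq_iff (mul_ne_zero hd.ne' h0a.ne')]
            ring
          rw [harg] at hc
          calc Mf a F ≤ (a / d) * Mf a ((d / a) * F) + (1 - a / d) * Mf a 0 := hc
            _ = (a / d) * Mf a ((d / a) * F) := by rw [h0 a]; ring
        have step3 : Mf a ((d / a) * F) ≤ a⁻¹ * ∫ t in Ioc 0 a, Mf a (f t) := by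
          rw [← havg_f, ← havg_g]; exact hjen
        have step4 : (a / d) * (a⁻¹ * ∫ t in Ioc 0 a, Mf a (f t)) ≤ R / d := by
          have h3 : (a / d) * (a⁻¹ * ∫ t in Ioc 0 a, Mf a (f t))
              = (∫ t in Ioc 0 a, Mf a (f t)) / d := by
            field_simp
          rw [h3]
          gcongr
        calc Mf a |g a| ≤ Mf a F := step1
          _ ≤ (a / d) * Mf a ((d / a) * F) := step2
          _ ≤ (a / d) * (a⁻¹ * ∫ t in Ioc 0 a, Mf a (f t)) := by
              refine mul_le_mul_of_nonneg_left step3 (by positivity)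
          _ ≤ R / d := step4
    -- conclude
    have hcompl : ∫⁻ a in (Icc 0 d)ᶜ, ENNReal.ofReal (Mf a |g a|) = 0 := by
      have hae : ∀ᵐ a ∂volume, a ∈ (Icc 0 d)ᶜ →
          ENNReal.ofReal (Mf a |g a|) = (fun _ : ℝ => (0:ℝ≥0∞)) a := by
        refine ae_of_all _ fun a ha => ?_
        rw [hzero a ha, abs_zero, h0 a, ENNReal.ofReal_zero]
      rw [setLIntegral_congr_fun_ae measurableSet_Icc.compl hae, lintegral_zero]
    have hIcc : ∫⁻ a in Icc 0 d, ENNReal.ofReal (Mf a |g a|) ≤ ENNReal.ofReal R := by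
      calc ∫⁻ a in Icc 0 d, ENNReal.ofReal (Mf a |g a|)
          ≤ ∫⁻ _ in Icc 0 d, ENNReal.ofReal (R / d) :=
            setLIntegral_mono measurable_const fun a ha =>
              ENNReal.ofReal_le_ofReal (hpt a ha)
        _ = ENNReal.ofReal (R / d) * volume (Icc 0 d) := setLIntegral_const _ _
        _ = ENNReal.ofReal R := by
            rw [Real.volume_Icc, sub_zero, ← ENNReal.ofReal_mul (div_nonneg hR0 hd.le),
              div_mul_cancel₀ _ hd.ne']
    have hRHS : ENNReal.ofReal R ≤ ∫⁻ a, ENNReal.ofReal (φ a) := by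
      rw [hR, ofReal_integral_eq_lintegral_ofReal hint (Eventually.of_forall hφ0)]
      exact setLIntegral_le_lintegral _ _
    calc ∫⁻ a, ENNReal.ofReal (Mf a |g a|)
        = (∫⁻ a in Icc 0 d, ENNReal.ofReal (Mf a |g a|))
          + ∫⁻ a in (Icc 0 d)ᶜ, ENNReal.ofReal (Mf a |g a|) :=
          (lintegral_add_compl _ measurableSet_Icc).symm
      _ ≤ ENNReal.ofReal R + 0 := by rw [hcompl]; exact add_le_add hIcc le_rfl
      _ = ENNReal.ofReal R := by rw [add_zero]
      _ ≤ ∫⁻ a, ENNReal.ofReal (φ a) := hRHS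
  · -- non-integrable case : RHS is infinite
    have htop : ∫⁻ a in Ioc 0 d, ENNReal.ofReal (φ a) = ⊤ := by
      by_contra hne
      apply hint
      refine ⟨hmeasφ.aestronglyMeasurable.restrict, ?_⟩
      rw [hasFiniteIntegral_iff_ofReal (Eventually.of_forall hφ0)]
      exact lt_top_iff_ne_top.mpr hne
    refine le_trans le_top ?_
    rw [← htop]
    exact setLIntegral_le_lintegral _ _

lemma musielak_meas_comp' {N : ℕ} {M : (Fin N → ℝ) → ℝ → ℝ} (hM : IsMusielakPhi M)
    {α : Type*} [MeasurableSpace α] {c : α → (Fin N → ℝ)} {f : α → ℝ}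
    (hc : Measurable c) (hf : Measurable f) (hf0 : ∀ a, 0 ≤ f a) :
    Measurable fun a => M (c a) (f a) := by
  have : (fun a => M (c a) (f a))
      = (Function.uncurry fun (s : ℝ) (x : Fin N → ℝ) => M x (max s 0)) ∘
        (fun a => (f a, c a)) := by
    funext a; simp [Function.uncurry, max_eq_left (hf0 a)]
  exact this ▸ (musielak_measurable_uncurry hM).comp (hf.prodMk hc)

theorem poincare_nonincreasing {N : ℕ} [NeZero N] (Ω : Set (Fin N → ℝ))
    (hΩo : IsOpen Ω) (hΩb : Bornology.IsBounded Ω) (d : ℝ) (hd : 0 < d)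
    (hstrip : ∀ x ∈ Ω, x 0 ∈ Icc 0 d)
    (M : (Fin N → ℝ) → ℝ → ℝ) (hM : IsMusielakPhi M)
    (hmono : ∀ t, 0 ≤ t → ∀ x y : Fin N → ℝ, (∀ i, i ≠ 0 → x i = y i) →
      x 0 ∈ Icc 0 d → y 0 ∈ Icc 0 d → x 0 ≤ y 0 → M y t ≤ M x t)
    (u : (Fin N → ℝ) → ℝ) (hu : ContDiff ℝ (⊤ : ℕ∞) u) (hcs : HasCompactSupport u)
    (hsupp : tsupport u ⊆ Ω) :
    ∫⁻ x in Ω, ENNReal.ofReal (M x |u x|) ≤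
      ∫⁻ x in Ω, ENNReal.ofReal (M x (d * |partialDeriv1 u x|)) := by
  obtain ⟨n, rfl⟩ : ∃ n, N = n + 1 := Nat.exists_eq_succ_of_ne_zero (NeZero.ne N)
  -- basic facts about u
  have hpd_cont : Continuous (partialDeriv1 u) :=
    (hu.continuous_fderiv (by simp)).clm_apply continuous_const
  have hnsupp : ∀ x : Fin (n+1) → ℝ, x 0 ∉ Icc 0 d → x ∉ tsupport u :=
    fun x hx hmem => hx (hstrip x (hsupp hmem))
  have hu0 : ∀ x : Fin (n+1) → ℝ, x ∉ tsupport u → u x = 0 :=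
    fun x hx => image_eq_zero_of_notMem_tsupport hx
  have hpd0 : ∀ x : Fin (n+1) → ℝ, x ∉ tsupport u → partialDeriv1 u x = 0 := by
    intro x hx
    unfold partialDeriv1
    rw [fderiv_of_notMem_tsupport ℝ hx]
    simp
  -- the per-line inequality
  have key : ∀ y : Fin n → ℝ,
      ∫⁻ a, ENNReal.ofReal (M (Fin.cons a y) |u (Fin.cons a y)|) ≤
        ∫⁻ a, ENNReal.ofReal (M (Fin.cons a y) (d * |partialDeriv1 u (Fin.cons a y)|)) := by
    intro y
    have hc_cont : Continuous fun t : ℝ => (Fin.cons t y : Fin (n+1) → ℝ) := by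
      refine continuous_pi fun i => ?_
      rcases i.eq_zero_or_eq_succ with rfl | ⟨j, rfl⟩
      · simpa [Fin.cons_zero] using continuous_id'
      · simpa [Fin.cons_succ] using continuous_const
    set g : ℝ → ℝ := fun t => u (Fin.cons t y) with hg
    set g' : ℝ → ℝ := fun t => partialDeriv1 u (Fin.cons t y) with hg'def
    have hg'_cont : Continuous g' := hpd_cont.comp hc_cont
    set w : Fin (n+1) → ℝ := Pi.single (0 : Fin (n+1)) (1:ℝ) with hw
    set z : Fin (n+1) → ℝ := Fin.cons (0:ℝ) y with hz
    have hcons_repr : ∀ t : ℝ, (Fin.cons t y : Fin (n+1) → ℝ) = z + t • w := by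
      intro t; funext i
      rcases i.eq_zero_or_eq_succ with rfl | ⟨j, rfl⟩
      · simp [hw, hz, Fin.cons_zero]
      · simp [hw, hz, Fin.cons_succ, Pi.single_eq_of_ne (Fin.succ_ne_zero j)]
    have hline : ∀ t : ℝ, HasDerivAt g (g' t) t := by
      intro t
      have h1 : HasDerivAt (fun t : ℝ => z + t • w) w t := by
        simpa using ((hasDerivAt_id t).smul_const w).const_add z
      have h2 := ((hu.differentiable (by simp)) _).hasFDerivAt.comp_hasDerivAt t h1
      have h3 : HasDerivAt (fun t : ℝ => u (Fin.cons t y))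
          (fderiv ℝ u (z + t • w) w) t := by
        refine HasDerivAt.congr_of_eventuallyEq h2 ?_
        filter_upwards with s
        rw [hcons_repr s]; rfl
      rw [hg'def]
      show HasDerivAt g (partialDeriv1 u (Fin.cons t y)) t
      unfold partialDeriv1
      rw [hcons_repr t]
      exact h3
    have hII : ∀ p q : ℝ, IntervalIntegrable g' volume p q :=
      fun p q => hg'_cont.intervalIntegrable p q
    have hzero : ∀ a : ℝ, a ∉ Icc 0 d → g a = 0 := by
      intro a ha
      exact hu0 _ (hnsupp _ (by simpa [Fin.cons_zero] using ha))
    have hrep : ∀ a, a ∈ Icc 0 d → |g a| ≤ ∫ t in Ioc 0 a, |g' t| := by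
      intro a ha
      have hftc : ∫ t in (-1:ℝ)..a, g' t = g a - g (-1) :=
        intervalIntegral.integral_eq_sub_of_hasDerivAt (fun t _ => hline t) (hII _ _)
      have hgm1 : g (-1) = 0 := hzero _ (by
        intro h
        have := h.1
        norm_num at this)
      have hsplit : (∫ t in (-1:ℝ)..(0:ℝ), g' t) + ∫ t in (0:ℝ)..a, g' t
          = ∫ t in (-1:ℝ)..a, g' t := intervalIntegral.integral_add_adjacent_intervals
            (hII _ _) (hII _ _)
      have hleft : ∫ t in (-1:ℝ)..(0:ℝ), g' t = 0 := by
        have h0 : ∀ᵐ t : ℝ, t ∉ ({0} : Set ℝ) :=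
          (Set.countable_singleton (0:ℝ)).ae_notMem volume
        have hae : ∀ᵐ t : ℝ, t ∈ Set.uIoc (-1:ℝ) 0 → g' t = (fun _ : ℝ => (0:ℝ)) t := by
          filter_upwards [h0] with t ht hmem
          rw [Set.uIoc_of_le (by norm_num : (-1:ℝ) ≤ 0)] at hmem
          have htlt : t < 0 := lt_of_le_of_ne hmem.2 (by simpa using ht)
          exact hpd0 _ (hnsupp _ (by simp [Fin.cons_zero]; intro h; linarith))
        rw [intervalIntegral.integral_congr_ae hae]
        simp
      have hval : g a = ∫ t in (0:ℝ)..a, g' t := by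
        rw [← hsplit, hleft, zero_add, hgm1, sub_zero] at hftc
        exact hftc.symm
      calc |g a| = |∫ t in (0:ℝ)..a, g' t| := by rw [hval]
        _ ≤ ∫ t in (0:ℝ)..a, |g' t| :=
            intervalIntegral.abs_integral_le_integral_abs ha.1
        _ = ∫ t in Ioc 0 a, |g' t| := intervalIntegral.integral_of_le ha.1
    have hmeasφ : Measurable fun a => M (Fin.cons a y) (d * |g' a|) :=
      musielak_meas_comp' hM hc_cont.measurable
        (continuous_const.mul hg'_cont.abs).measurable (fun a => by positivity)
    exact line_key d hd (fun t s => M (Fin.cons t y) s)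
      (fun t => hM.1 _) (fun t => hM.2.1 _) (fun t => hM.2.2.1 _)
      (fun t => musielak_contOn hM _)
      (fun s hs t t' ht ht' htt' => hmono s hs (Fin.cons t y) (Fin.cons t' y)
        (by intro i hi
            rcases i.eq_zero_or_eq_succ with rfl | ⟨j, rfl⟩
            · exact absurd rfl hi
            · simp [Fin.cons_succ])
        (by simpa using ht) (by simpa using ht') (by simpa using htt'))
      g g' hg'_cont hrep hzero hmeasφ
  -- global assembly via Fubini
  set Φ : (Fin (n+1) → ℝ) → ℝ≥0∞ := fun x => ENNReal.ofReal (M x |u x|) with hΦ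
  set Ψ : (Fin (n+1) → ℝ) → ℝ≥0∞ :=
    fun x => ENNReal.ofReal (M x (d * |partialDeriv1 u x|)) with hΨ
  have hΦm : Measurable Φ :=
    ENNReal.measurable_ofReal.comp (musielak_meas_comp' hM measurable_id
      hu.continuous.abs.measurable (fun x => abs_nonneg _))
  have hΨm : Measurable Ψ :=
    ENNReal.measurable_ofReal.comp (musielak_meas_comp' hM measurable_id
      (continuous_const.mul hpd_cont.abs).measurable (fun x => by positivity))
  set e := MeasurableEquiv.piFinSuccAbove (fun _ : Fin (n+1) => ℝ) 0 with he
  have hvp := volume_preserving_piFinSuccAbove (fun _ : Fin (n+1) => ℝ) 0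
  have hvps : MeasurePreserving (⇑e.symm) volume volume := hvp.symm e
  have hsymm : ∀ p : ℝ × (Fin n → ℝ), e.symm p = Fin.cons p.1 p.2 := by
    intro p
    simp [he, MeasurableEquiv.piFinSuccAbove, Fin.insertNthEquiv, Fin.insertNth_zero]
  have hΨzero : ∀ x, x ∉ Ω → Ψ x = 0 := by
    intro x hx
    have : partialDeriv1 u x = 0 := hpd0 x (fun h => hx (hsupp h))
    rw [hΨ]
    simp [this, hM.2.2.1 x]
  calc ∫⁻ x in Ω, Φ x ≤ ∫⁻ x, Φ x := setLIntegral_le_lintegral _ _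
    _ = ∫⁻ p : ℝ × (Fin n → ℝ), Φ (e.symm p) := (hvps.lintegral_comp hΦm).symm
    _ = ∫⁻ y, ∫⁻ a, Φ (e.symm (a, y)) := by
        rw [Measure.volume_eq_prod]
        exact lintegral_prod_symm _ (hΦm.comp e.symm.measurable).aemeasurable
    _ ≤ ∫⁻ y, ∫⁻ a, Ψ (e.symm (a, y)) := by
        refine lintegral_mono fun y => ?_
        simp only [hsymm]
        exact key y
    _ = ∫⁻ p : ℝ × (Fin n → ℝ), Ψ (e.symm p) := by
        rw [Measure.volume_eq_prod]
        exact (lintegral_prod_symm _ (hΨm.comp e.symm.measurable).aemeasurable).symm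
    _ = ∫⁻ x, Ψ x := hvps.lintegral_comp hΨm
    _ = ∫⁻ x in Ω, Ψ x := by
        rw [← lintegral_add_compl Ψ hΩo.measurableSet]
        have : ∫⁻ x in Ωᶜ, Ψ x = 0 := by
          have hae : ∀ᵐ x ∂volume, x ∈ Ωᶜ → Ψ x = (fun _ => (0:ℝ≥0∞)) x :=
            ae_of_all _ fun x hx => hΨzero x hx
          rw [setLIntegral_congr_fun_ae hΩo.measurableSet.compl hae, lintegral_zero]
        rw [this, add_zero]
end

section
/- Let Ω ⊂ ℝ^N be a bounded open set contained in the strip [0,d] × ℝ^{N-1}, and let M be a Musielak Φ-function such that for every t ≥ 0 the partial map x₁ ∈ [0,d] ↦ M((x₁,x'),t) is non-decreasing. Then for every u ∈ C_c^∞(Ω), ∫_Ω M(x,|u(x)|) dx ≤ ∫_Ω M(x, d·|∂₁u(x)|) dx. -/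
open MeasureTheory Filter Set

lemma phi_continuous_max {g : ℝ → ℝ} (hmono : MonotoneOn g (Ici 0))
    (hconv : ConvexOn ℝ (Ici 0) g) (h0 : g 0 = 0) :
    Continuous fun s => g (max s 0) := by
  have hcont : ContinuousOn g (Ici 0) := by
    intro a ha
    rcases eq_or_lt_of_le (mem_Ici.mp ha) with h | h
    · subst h
      have hub : ∀ s ∈ Icc (0:ℝ) 1, g s ≤ s * g 1 := by
        intro s hs
        have := hconv.2 (mem_Ici.mpr zero_le_one) (self_mem_Ici)
          hs.1 (show (0:ℝ) ≤ 1 - s by linarith [hs.2]) (by ring)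
        simpa [h0, smul_eq_mul] using this
      have hnn : ∀ s ∈ Ici (0:ℝ), 0 ≤ g s := by
        intro s hs
        have := hmono self_mem_Ici hs (mem_Ici.mp hs)
        simpa [h0] using this
      have : Tendsto g (nhdsWithin 0 (Ici 0)) (nhds 0) := by
        apply squeeze_zero'
        · filter_upwards [self_mem_nhdsWithin] with s hs using hnn s hs
        · have h1 : ∀ᶠ s in nhdsWithin (0:ℝ) (Ici 0), s ≤ 1 :=
            eventually_nhdsWithin_of_eventually_nhds (eventually_le_nhds zero_lt_one)
          filter_upwards [self_mem_nhdsWithin, h1] with s hs hs1 using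
            hub s ⟨hs, hs1⟩
        · have : Tendsto (fun s : ℝ => s * g 1) (nhds 0) (nhds (0 * g 1)) :=
            (continuous_id.mul continuous_const).tendsto 0
          simpa using this.mono_left nhdsWithin_le_nhds
      simpa [ContinuousWithinAt, h0] using this
    · have hconv' : ConvexOn ℝ (Ioi 0) g :=
        hconv.subset Ioi_subset_Ici_self (convex_Ioi 0)
      have hco := hconv'.continuousOn isOpen_Ioi
      exact ((hco.continuousAt (isOpen_Ioi.mem_nhds h)).continuousWithinAt)
  exact hcont.comp_continuous (continuous_id.max continuous_const)
    (fun s => mem_Ici.mpr (le_max_right _ _))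

lemma meas_comp_phi {α : Type*} [MeasurableSpace α] {M : α → ℝ → ℝ}
    (hmeas : ∀ s : ℝ, 0 ≤ s → Measurable fun x => M x s)
    (hcont : ∀ x, Continuous fun s => M x (max s 0))
    {f : α → ℝ} (hf : Measurable f) (hf0 : ∀ x, 0 ≤ f x) :
    Measurable fun x => M x (f x) := by
  have h := measurable_uncurry_of_continuous_of_measurable
    (u := fun (s : ℝ) (x : α) => M x (max s 0)) hcont
    (fun s => hmeas (max s 0) (le_max_right _ _))
  have heq : (fun x => M x (f x))
      = Function.uncurry (fun (s : ℝ) (x : α) => M x (max s 0)) ∘ fun x => (f x, x) := by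
    funext x
    simp [Function.uncurry, max_eq_left ((hf0 x))]
  rw [heq]
  exact h.comp (hf.prodMk measurable_id)

lemma fubini_strip {n : ℕ} {d : ℝ} {g : (Fin (n+1) → ℝ) → ENNReal}
    (hg : Measurable g) :
    ∫⁻ x in {x : Fin (n+1) → ℝ | x 0 ∈ Icc 0 d},
        ∫⁻ t in Icc (0:ℝ) d, g (Function.update x 0 t)
      = ENNReal.ofReal d * ∫⁻ x in {x : Fin (n+1) → ℝ | x 0 ∈ Icc 0 d}, g x := by
  classical
  set e := MeasurableEquiv.piFinSuccAbove (fun _ : Fin (n+1) => ℝ) 0 with he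
  have hep : MeasurePreserving (⇑e.symm) ((volume : Measure ℝ).prod volume) volume :=
    (volume_preserving_piFinSuccAbove (fun _ : Fin (n+1) => ℝ) 0).symm
  have hemb : MeasurableEmbedding (⇑e.symm) := e.symm.measurableEmbedding
  have hsymm : ∀ (t : ℝ) (y : Fin n → ℝ), e.symm (t, y) = Fin.cons t y := by
    intro t y
    simp only [he, MeasurableEquiv.piFinSuccAbove_symm_apply]
    exact Fin.insertNth_zero' t y
  have hupd : ∀ (x : Fin (n+1) → ℝ) (t : ℝ),
      Function.update x 0 t = e.symm (t, (e x).2) := by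
    intro x t
    conv_lhs => rw [← e.symm_apply_apply x]
    have : e x = ((e x).1, (e x).2) := rfl
    rw [this, hsymm, hsymm, Fin.update_cons_zero]
  have hpre : (⇑e.symm) ⁻¹' {x : Fin (n+1) → ℝ | x 0 ∈ Icc 0 d}
      = (Icc (0:ℝ) d) ×ˢ (univ : Set (Fin n → ℝ)) := by
    ext p
    simp [hsymm p.1 p.2]
  have hgsm : Measurable fun p : ℝ × (Fin n → ℝ) => g (e.symm p) :=
    hg.comp e.symm.measurable
  have hf2 : Measurable fun y : Fin n → ℝ => ∫⁻ t in Icc (0:ℝ) d, g (e.symm (t, y)) := by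
    apply Measurable.lintegral_prod_right (f := fun y t => g (e.symm (t, y)))
    exact hgsm.comp measurable_swap
  have hfmeas : Measurable fun x : Fin (n+1) → ℝ =>
      ∫⁻ t in Icc (0:ℝ) d, g (Function.update x 0 t) := by
    have : (fun x : Fin (n+1) → ℝ => ∫⁻ t in Icc (0:ℝ) d, g (Function.update x 0 t))
        = (fun y : Fin n → ℝ => ∫⁻ t in Icc (0:ℝ) d, g (e.symm (t, y))) ∘
          (fun x => (e x).2) := by
      funext x
      simp only [Function.comp]
      congr 1
      funext t
      rw [hupd]
    rw [this]
    exact hf2.comp (measurable_snd.comp e.measurable)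
  have key : ∀ (F : (Fin (n+1) → ℝ) → ENNReal), Measurable F →
      ∫⁻ x in {x : Fin (n+1) → ℝ | x 0 ∈ Icc 0 d}, F x
        = ∫⁻ s in Icc (0:ℝ) d, (∫⁻ y, F (e.symm (s, y))) := by
    intro F hF
    rw [← hep.setLIntegral_comp_preimage_emb hemb F _, hpre,
      ← Measure.prod_restrict, Measure.restrict_univ]
    exact lintegral_prod (fun p => F (e.symm p)) ((hF.comp e.symm.measurable).aemeasurable)
  calc ∫⁻ x in {x : Fin (n+1) → ℝ | x 0 ∈ Icc 0 d},
        ∫⁻ t in Icc (0:ℝ) d, g (Function.update x 0 t)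
      = ∫⁻ s in Icc (0:ℝ) d, ∫⁻ y,
          (∫⁻ t in Icc (0:ℝ) d, g (Function.update (e.symm (s, y)) 0 t)) := key _ hfmeas
    _ = ∫⁻ s in Icc (0:ℝ) d, ∫⁻ y, (∫⁻ t in Icc (0:ℝ) d, g (e.symm (t, y))) := by
        apply lintegral_congr; intro s
        apply lintegral_congr; intro y
        apply lintegral_congr; intro t
        rw [hupd, e.apply_symm_apply]
    _ = (∫⁻ y, (∫⁻ t in Icc (0:ℝ) d, g (e.symm (t, y)))) * ENNReal.ofReal d := by
        rw [setLIntegral_const, Real.volume_Icc, sub_zero]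
    _ = (∫⁻ t in Icc (0:ℝ) d, ∫⁻ y, g (e.symm (t, y))) * ENNReal.ofReal d := by
        congr 1
        exact lintegral_lintegral_swap ((hgsm.comp measurable_swap).aemeasurable)
    _ = ENNReal.ofReal d * ∫⁻ x in {x : Fin (n+1) → ℝ | x 0 ∈ Icc 0 d}, g x := by
        rw [key g hg, mul_comm]

theorem poincare_nondecreasing {N : ℕ} [NeZero N] (Ω : Set (Fin N → ℝ))
    (hΩo : IsOpen Ω) (hΩb : Bornology.IsBounded Ω) (d : ℝ) (hd : 0 < d)
    (hstrip : ∀ x ∈ Ω, x 0 ∈ Icc 0 d)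
    (M : (Fin N → ℝ) → ℝ → ℝ) (hM : IsMusielakPhi M)
    (hmono : ∀ t, 0 ≤ t → ∀ x y : Fin N → ℝ, (∀ i, i ≠ 0 → x i = y i) →
      x 0 ∈ Icc 0 d → y 0 ∈ Icc 0 d → x 0 ≤ y 0 → M x t ≤ M y t)
    (u : (Fin N → ℝ) → ℝ) (hu : ContDiff ℝ (⊤ : ℕ∞) u) (hcs : HasCompactSupport u)
    (hsupp : tsupport u ⊆ Ω) :
    ∫⁻ x in Ω, ENNReal.ofReal (M x |u x|) ≤
      ∫⁻ x in Ω, ENNReal.ofReal (M x (d * |partialDeriv1 u x|)) := by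
  obtain ⟨hMmono, hMconv, hM0, hMpos, hMmeas, -, -, -⟩ := hM
  obtain ⟨n, rfl⟩ : ∃ n, N = n + 1 :=
    ⟨N - 1, (Nat.succ_pred_eq_of_pos (Nat.pos_of_ne_zero (NeZero.ne N))).symm⟩
  have hMnn : ∀ z s, 0 ≤ s → 0 ≤ M z s := fun z s hs => by
    have := hMmono z self_mem_Ici (mem_Ici.mpr hs) hs
    simpa [hM0 z] using this
  have hcontmax : ∀ z, Continuous fun s => M z (max s 0) :=
    fun z => phi_continuous_max (hMmono z) (hMconv z) (hM0 z)
  have hMcontOn : ∀ z, ContinuousOn (M z) (Ici 0) := by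
    intro z
    apply ((hcontmax z).continuousOn (s := Ici 0)).congr
    intro s hs
    exact (congrArg (M z) (max_eq_left (mem_Ici.mp hs))).symm
  have hpd_cont : Continuous (partialDeriv1 u) := by
    have hfd : Continuous (fderiv ℝ u) := hu.continuous_fderiv (by simp)
    exact (ContinuousLinearMap.apply ℝ ℝ
      (Pi.single 0 1 : Fin (n+1) → ℝ)).continuous.comp hfd
  have hGr_meas : Measurable fun z : Fin (n+1) → ℝ => M z (d * |partialDeriv1 u z|) :=
    meas_comp_phi hMmeas hcontmax (continuous_const.mul hpd_cont.abs).measurable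
      (fun z => by positivity)
  set G : (Fin (n+1) → ℝ) → ENNReal :=
    fun z => ENNReal.ofReal (M z (d * |partialDeriv1 u z|)) with hGdef
  have hG_meas : Measurable G := hGr_meas.ennreal_ofReal
  set S : Set (Fin (n+1) → ℝ) := {x | x 0 ∈ Icc 0 d} with hSdef
  have hS : MeasurableSet S := (measurable_pi_apply 0) measurableSet_Icc
  have hΩS : Ω ⊆ S := fun x hx => hstrip x hx
  have hlt : ∀ z ∈ Ω, z 0 < d := by
    intro z hz
    obtain ⟨ε, hε, hball⟩ := Metric.isOpen_iff.mp hΩo z hz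
    have hz' : Function.update z 0 (z 0 + ε / 2) ∈ Metric.ball z ε := by
      rw [Metric.mem_ball]
      have hle : dist (Function.update z 0 (z 0 + ε / 2)) z ≤ ε / 2 := by
        refine (dist_pi_le_iff (by positivity)).mpr fun i => ?_
        rcases eq_or_ne i 0 with rfl | hi
        · rw [Function.update_self, Real.dist_eq, abs_of_nonneg (by linarith)]
          linarith
        · rw [Function.update_of_ne hi, dist_self]
          positivity
      exact lt_of_le_of_lt hle (by linarith)
    have := (hstrip _ (hball hz')).2
    rw [Function.update_self] at this
    linarith
  -- the pointwise key inequality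
  have key : ∀ x ∈ S, ENNReal.ofReal (M x |u x|)
      ≤ (ENNReal.ofReal d)⁻¹ * ∫⁻ t in Icc (0:ℝ) d, G (Function.update x 0 t) := by
    intro x hx
    have hx00 : (0:ℝ) ≤ x 0 := hx.1
    have hx0d : x 0 ≤ d := hx.2
    set y : ℝ → (Fin (n+1) → ℝ) := fun t => Function.update x 0 t with hy
    set ψ : ℝ → ℝ := fun t => partialDeriv1 u (y t) with hψ
    have hline_eq : y = fun t : ℝ => x + (t - x 0) • (Pi.single 0 1 : Fin (n+1) → ℝ) := by
      funext t i
      rcases eq_or_ne i 0 with rfl | hi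
      · simp [hy]
      · simp [hy, Function.update_of_ne hi, Pi.single_eq_of_ne hi]
    have hycont : Continuous y := by
      rw [hline_eq]
      exact continuous_const.add ((continuous_id.sub continuous_const).smul continuous_const)
    have hyD : ∀ t : ℝ, HasDerivAt y (Pi.single 0 1) t := by
      intro t
      rw [hline_eq]
      have := (((hasDerivAt_id t).sub_const (x 0)).smul_const
        (Pi.single 0 1 : Fin (n+1) → ℝ)).const_add x
      simpa using this
    have hψc : Continuous ψ := hpd_cont.comp hycont
    have huD : ∀ t : ℝ, HasDerivAt (fun t => u (y t)) (ψ t) t := fun t =>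
      ((hu.differentiable (by simp) (y t)).hasFDerivAt).comp_hasDerivAt t (hyD t)
    have hud0 : u (y d) = 0 := by
      apply image_eq_zero_of_notMem_tsupport
      intro hmem
      have := hlt _ (hsupp hmem)
      simp [hy] at this
    have hFTC : ∫ t in (x 0)..d, ψ t = - u x := by
      rw [intervalIntegral.integral_eq_sub_of_hasDerivAt (fun t _ => huD t)
        (hψc.intervalIntegrable _ _), hud0, hy]
      simp [Function.update_eq_self]
    have habs : |u x| ≤ ∫ t in (x 0)..d, |ψ t| := by
      calc |u x| = |∫ t in (x 0)..d, ψ t| := by rw [hFTC, abs_neg]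
      _ ≤ ∫ t in (x 0)..d, |ψ t| := intervalIntegral.abs_integral_le_integral_abs hx0d
    set μ : Measure ℝ := volume.restrict (Icc 0 d) with hμ
    have hμuniv : μ univ = ENNReal.ofReal d := by
      rw [hμ, Measure.restrict_apply_univ, Real.volume_Icc, sub_zero]
    haveI : IsFiniteMeasure μ := ⟨by rw [hμuniv]; exact ENNReal.ofReal_lt_top⟩
    haveI : NeZero μ := by
      refine ⟨fun h => ?_⟩
      rw [h] at hμuniv
      simp only [Measure.coe_zero, Pi.zero_apply] at hμuniv
      exact absurd hμuniv.symm (by simp [ENNReal.ofReal_eq_zero]; linarith)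
    have htoReal : (μ univ).toReal = d := by rw [hμuniv, ENNReal.toReal_ofReal hd.le]
    obtain ⟨C, hC⟩ := (isCompact_Icc (a := (0:ℝ)) (b := d)).exists_bound_of_continuousOn
      hψc.continuousOn
    set C' : ℝ := max C 0 with hC'
    have hC'0 : 0 ≤ C' := le_max_right _ _
    have hψle : ∀ t ∈ Icc (0:ℝ) d, |ψ t| ≤ C' := fun t ht =>
      le_trans (by simpa using hC t ht) (le_max_left _ _)
    set f : ℝ → ℝ := (Ici (x 0)).indicator (fun t => d * |ψ t|) with hf
    have hf_nonneg : ∀ t, 0 ≤ f t :=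
      fun t => Set.indicator_nonneg (fun t _ => by positivity) t
    have hf_meas : Measurable f :=
      ((continuous_const.mul hψc.abs).measurable).indicator measurableSet_Ici
    have hfi : Integrable f μ :=
      ((continuous_const.mul hψc.abs).integrableOn_Icc).indicator measurableSet_Ici
    have hf_le : ∀ t ∈ Icc (0:ℝ) d, f t ≤ d * C' := by
      intro t ht
      by_cases h : x 0 ≤ t
      · rw [hf, indicator_of_mem (mem_Ici.mpr h)]
        exact mul_le_mul_of_nonneg_left (hψle t ht) hd.le
      · rw [hf, indicator_of_notMem (by simpa using h)]
        positivity
    have hgf_meas : Measurable fun t => M x (f t) := by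
      have : (fun t => M x (f t)) = (fun s => M x (max s 0)) ∘ f := by
        funext t; simp [Function.comp, max_eq_left (hf_nonneg t)]
      rw [this]; exact (hcontmax x).measurable.comp hf_meas
    have hgfi : Integrable (fun t => M x (f t)) μ := by
      refine Integrable.mono' (integrable_const (M x (d * C')))
        hgf_meas.aestronglyMeasurable ?_
      filter_upwards [ae_restrict_mem measurableSet_Icc] with t ht
      rw [Real.norm_eq_abs, abs_of_nonneg (hMnn _ _ (hf_nonneg t))]
      exact hMmono x (mem_Ici.mpr (hf_nonneg t)) (mem_Ici.mpr (by positivity)) (hf_le t ht)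
    have hJ : M x (⨍ t, f t ∂μ) ≤ ⨍ t, M x (f t) ∂μ :=
      (hMconv x).map_average_le (hMcontOn x) isClosed_Ici
        (Eventually.of_forall fun t => mem_Ici.mpr (hf_nonneg t)) hfi hgfi
    have havg : ⨍ t, f t ∂μ = ∫ t in (x 0)..d, |ψ t| := by
      rw [average_eq, measureReal_def, htoReal, hμ, hf]
      rw [integral_indicator measurableSet_Ici, Measure.restrict_restrict measurableSet_Ici]
      have hinter : Ici (x 0) ∩ Icc 0 d = Icc (x 0) d := by
        ext t
        simp only [mem_inter_iff, mem_Icc, mem_Ici]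
        constructor
        · rintro ⟨h3, ⟨-, h2⟩⟩; exact ⟨h3, h2⟩
        · rintro ⟨h1, h2⟩; exact ⟨h1, ⟨le_trans hx00 h1, h2⟩⟩
      rw [hinter, MeasureTheory.integral_Icc_eq_integral_Ioc,
        ← intervalIntegral.integral_of_le hx0d, intervalIntegral.integral_const_mul]
      rw [smul_eq_mul, ← mul_assoc, inv_mul_cancel₀ hd.ne', one_mul]
    have havg_nn : 0 ≤ ⨍ t, f t ∂μ := le_trans (abs_nonneg _) (havg ▸ habs)
    have h1 : M x |u x| ≤ M x (⨍ t, f t ∂μ) :=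
      hMmono x (mem_Ici.mpr (abs_nonneg _)) (mem_Ici.mpr havg_nn) (havg ▸ habs)
    set h2 : ℝ → ℝ := fun t => M (y t) (d * |ψ t|) with hh2
    have hh2_meas : Measurable h2 := by
      have : h2 = (fun z => M z (d * |partialDeriv1 u z|)) ∘ y := rfl
      rw [this]; exact hGr_meas.comp hycont.measurable
    have hy0 : ∀ t, (y t) 0 = t := fun t => Function.update_self 0 t x
    have hh2_le : ∀ t ∈ Icc (0:ℝ) d, h2 t ≤ M (y d) (d * C') := by
      intro t ht
      calc h2 t ≤ M (y d) (d * |ψ t|) := by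
            refine hmono _ (by positivity) (y t) (y d)
              (fun i hi => by simp [hy, Function.update_of_ne hi]) ?_ ?_ ?_
            · rw [hy0]; exact ht
            · rw [hy0]; exact ⟨hd.le, le_refl d⟩
            · rw [hy0, hy0]; exact ht.2
        _ ≤ M (y d) (d * C') :=
            hMmono (y d) (mem_Ici.mpr (by positivity)) (mem_Ici.mpr (by positivity))
              (mul_le_mul_of_nonneg_left (hψle t ht) hd.le)
    have hh2i : Integrable h2 μ := by
      refine Integrable.mono' (integrable_const (M (y d) (d * C')))
        hh2_meas.aestronglyMeasurable ?_
      filter_upwards [ae_restrict_mem measurableSet_Icc] with t ht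
      rw [Real.norm_eq_abs, abs_of_nonneg (hMnn _ _ (by positivity))]
      exact hh2_le t ht
    have hpoint : ∀ t ∈ Icc (0:ℝ) d, M x (f t) ≤ h2 t := by
      intro t ht
      by_cases h : x 0 ≤ t
      · rw [hf, indicator_of_mem (mem_Ici.mpr h)]
        refine hmono _ (by positivity) x (y t)
          (fun i hi => (Function.update_of_ne hi t x).symm) ⟨hx00, hx0d⟩ ?_ ?_
        · rw [hy0]; exact ht
        · rw [hy0]; exact h
      · rw [hf, indicator_of_notMem (by simpa using h), hM0]
        exact hMnn _ _ (by positivity)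
    have h3 : ⨍ t, M x (f t) ∂μ ≤ ⨍ t, h2 t ∂μ := by
      rw [average_eq, average_eq]
      refine smul_le_smul_of_nonneg_left ?_ (by positivity)
      refine integral_mono_ae hgfi hh2i ?_
      filter_upwards [ae_restrict_mem measurableSet_Icc] with t ht
      exact hpoint t ht
    have hfinal : M x |u x| ≤ d⁻¹ * ∫ t, h2 t ∂μ := by
      have := le_trans h1 (le_trans hJ h3)
      rwa [average_eq (f := h2), measureReal_def, htoReal, smul_eq_mul] at this
    calc ENNReal.ofReal (M x |u x|) ≤ ENNReal.ofReal (d⁻¹ * ∫ t, h2 t ∂μ) :=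
          ENNReal.ofReal_le_ofReal hfinal
      _ = (ENNReal.ofReal d)⁻¹ * ENNReal.ofReal (∫ t, h2 t ∂μ) := by
          rw [ENNReal.ofReal_mul (by positivity), ENNReal.ofReal_inv_of_pos hd]
      _ ≤ (ENNReal.ofReal d)⁻¹ * ∫⁻ t in Icc (0:ℝ) d, G (Function.update x 0 t) := by
          refine mul_le_mul_right ?_ _
          have heqint : ∫ t, h2 t ∂μ = (∫⁻ t, ENNReal.ofReal (h2 t) ∂μ).toReal :=
            integral_eq_lintegral_of_nonneg_ae
              (Eventually.of_forall fun t => hMnn _ _ (by positivity))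
              hh2_meas.aestronglyMeasurable
          rw [heqint]
          refine le_trans ENNReal.ofReal_toReal_le (le_of_eq ?_)
          rw [hμ]
  -- assembling
  have hd0 : (ENNReal.ofReal d) ≠ 0 := (ENNReal.ofReal_pos.mpr hd).ne'
  have hGzero : ∀ x, x ∉ Ω → G x = 0 := by
    intro x hx
    have hfd0 : fderiv ℝ u x = 0 := by
      by_contra h
      exact hx (hsupp (support_fderiv_subset ℝ (by simpa [Function.mem_support] using h)))
    simp [hGdef, partialDeriv1, hfd0, hM0]
  calc ∫⁻ x in Ω, ENNReal.ofReal (M x |u x|)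
      ≤ ∫⁻ x in S, ENNReal.ofReal (M x |u x|) := lintegral_mono_set hΩS
    _ ≤ ∫⁻ x in S, (ENNReal.ofReal d)⁻¹ * ∫⁻ t in Icc (0:ℝ) d, G (Function.update x 0 t) := by
        refine lintegral_mono_ae ?_
        filter_upwards [ae_restrict_mem hS] with x hx
        exact key x hx
    _ = (ENNReal.ofReal d)⁻¹ * ∫⁻ x in S, ∫⁻ t in Icc (0:ℝ) d, G (Function.update x 0 t) :=
        lintegral_const_mul' _ _ (ENNReal.inv_ne_top.mpr hd0)
    _ = (ENNReal.ofReal d)⁻¹ * (ENNReal.ofReal d * ∫⁻ x in S, G x) := by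
        rw [hSdef, fubini_strip hG_meas]
    _ = ∫⁻ x in S, G x := by
        rw [← mul_assoc, ENNReal.inv_mul_cancel hd0 ENNReal.ofReal_ne_top, one_mul]
    _ = ∫⁻ x in S, Ω.indicator G x := by
        apply setLIntegral_congr_fun hS
        intro x hx
        by_cases hxΩ : x ∈ Ω
        · rw [indicator_of_mem hxΩ]
        · rw [indicator_of_notMem hxΩ, hGzero x hxΩ]
    _ = ∫⁻ x in Ω, G x := by
        rw [lintegral_indicator hΩo.measurableSet,
          Measure.restrict_restrict hΩo.measurableSet, inter_eq_left.mpr hΩS]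
end

section
/- Let Ω ⊂ ℝ^N be a bounded open set contained in [0,d] × ℝ^{N-1}, and let M be a Musielak Φ-function for which there exists t₀ ≥ 0 such that for each x', the map x₁ ∈ [0,d] ↦ M((x₁,x'),t) is non-decreasing when t ≤ t₀ and non-increasing when t > t₀. Then for every u ∈ C_c^∞(Ω), ∫_Ω M(x,|u(x)|) dx ≤ (1/2) ∫_Ω M(x, 2d·|∂₁u(x)|) dx. -/
open MeasureTheory Filter Set ENNReal

open intervalIntegral


section Scalar

variable {F : ℝ → ℝ}

private lemma chord0 (hconv : ConvexOn ℝ (Ici 0) F) (hF0 : F 0 = 0) {θ t : ℝ}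
    (hθ0 : 0 ≤ θ) (hθ1 : θ ≤ 1) (ht : 0 ≤ t) : F (θ * t) ≤ θ * F t := by
  have h := hconv.2 (mem_Ici.2 (le_refl (0:ℝ))) (mem_Ici.2 ht)
    (by linarith : (0:ℝ) ≤ 1 - θ) hθ0 (by ring)
  simpa [hF0, smul_eq_mul] using h

private lemma exists_subgradient (hconv : ConvexOn ℝ (Ici 0) F) {m : ℝ} (hm : 0 < m) :
    ∃ k : ℝ, ∀ σ : ℝ, 0 ≤ σ → F m + k * (σ - m) ≤ F σ := by
  classical
  set S : Set ℝ := (fun σ => (F m - F σ) / (m - σ)) '' (Ico 0 m) with hS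
  have hne : S.Nonempty := ⟨_, ⟨0, ⟨le_refl _, hm⟩, rfl⟩⟩
  have hub : ∀ z, m < z → ∀ y ∈ S, y ≤ (F z - F m) / (z - m) := by
    rintro z hz y ⟨σ, ⟨hσ0, hσm⟩, rfl⟩
    exact hconv.slope_mono_adjacent (mem_Ici.2 hσ0)
      (mem_Ici.2 (by linarith : (0:ℝ) ≤ z)) hσm hz
  have hbdd : BddAbove S := ⟨(F (m+1) - F m) / ((m+1) - m), fun y hy =>
    hub (m+1) (by linarith) y hy⟩
  refine ⟨sSup S, fun σ hσ0 => ?_⟩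
  rcases lt_trichotomy σ m with hσm | rfl | hσm
  · have hmem : (F m - F σ) / (m - σ) ∈ S := ⟨σ, ⟨hσ0, hσm⟩, rfl⟩
    have h1 : (F m - F σ) / (m - σ) ≤ sSup S := le_csSup hbdd hmem
    have h2 : 0 < m - σ := by linarith
    rw [div_le_iff₀ h2] at h1
    nlinarith
  · simp
  · have h1 : sSup S ≤ (F σ - F m) / (σ - m) := csSup_le hne (hub σ hσm)
    have h2 : 0 < σ - m := by linarith
    rw [le_div_iff₀ h2] at h1
    nlinarith

private lemma convexOn_shift (hconv : ConvexOn ℝ (Ici 0) F) {t₀ : ℝ} (ht₀ : 0 ≤ t₀) :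
    ConvexOn ℝ (Ici 0) (fun σ => F (σ + t₀) - F t₀) := by
  refine ⟨convex_Ici 0, ?_⟩
  intro x hx y hy a b ha hb hab
  have hx' : x + t₀ ∈ Ici (0:ℝ) := by
    simp only [mem_Ici] at hx ⊢; linarith
  have hy' : y + t₀ ∈ Ici (0:ℝ) := by
    simp only [mem_Ici] at hy ⊢; linarith
  have h := hconv.2 hx' hy' ha hb hab
  have harg : a • (x + t₀) + b • (y + t₀) = (a • x + b • y) + t₀ := by
    simp only [smul_eq_mul]; nlinarith [hab]
  rw [harg] at h
  simp only [smul_eq_mul] at h ⊢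
  have hcc : a * F t₀ + b * F t₀ = F t₀ := by rw [← add_mul, hab, one_mul]
  linarith

end Scalar

section Helpers

private lemma intervalIntegrable_of_bounded {f : ℝ → ℝ} {a b : ℝ} (hf : Measurable f) {C : ℝ}
    (hC : ∀ s ∈ uIcc a b, |f s| ≤ C) : IntervalIntegrable f volume a b := by
  rw [intervalIntegrable_iff]
  refine Integrable.mono' (g := fun _ => C)
    (integrableOn_const measure_Ioc_lt_top.ne) hf.aestronglyMeasurable ?_
  filter_upwards [ae_restrict_mem measurableSet_uIoc] with s hs
  exact hC s (uIoc_subset_uIcc hs)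

private lemma mono_comp_intervalIntegrable {g : ℝ → ℝ} (hg : Monotone g) {τ : ℝ → ℝ}
    (hτ : Continuous τ) (a b : ℝ) :
    IntervalIntegrable (fun s => g (τ s)) volume a b := by
  obtain ⟨s₁, hs₁, hmin⟩ := isCompact_uIcc.exists_isMinOn ⟨a, left_mem_uIcc⟩ hτ.continuousOn
  obtain ⟨s₂, hs₂, hmax⟩ := isCompact_uIcc.exists_isMaxOn ⟨a, left_mem_uIcc⟩ hτ.continuousOn
  refine intervalIntegrable_of_bounded (hg.measurable.comp hτ.measurable)
    (C := max |g (τ s₁)| |g (τ s₂)|) (fun s hs => ?_)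
  rw [abs_le]
  constructor
  · have h1 : g (τ s₁) ≤ g (τ s) := hg (hmin hs)
    have h2 : -|g (τ s₁)| ≤ g (τ s₁) := neg_abs_le _
    have h3 : |g (τ s₁)| ≤ max |g (τ s₁)| |g (τ s₂)| := le_max_left _ _
    linarith
  · have h1 : g (τ s) ≤ g (τ s₂) := hg (hmax hs)
    have h2 : g (τ s₂) ≤ |g (τ s₂)| := le_abs_self _
    have h3 : |g (τ s₂)| ≤ max |g (τ s₁)| |g (τ s₂)| := le_max_right _ _
    linarith

end Helpers

section Row

set_option maxHeartbeats 1000000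

private lemma abstract_row {F τ : ℝ → ℝ} {t₀ d r m : ℝ}
    (hconv : ConvexOn ℝ (Ici 0) F) (hmono : MonotoneOn F (Ici 0)) (hF0 : F 0 = 0)
    (ht₀ : 0 ≤ t₀) (hd : 0 < d) (hr0 : 0 ≤ r) (hrd : r ≤ d) (hm0 : 0 ≤ m)
    (hτc : Continuous τ) (hτ0 : ∀ s, 0 ≤ τ s)
    (hma : 2 * d * m ≤ ∫ s in (0:ℝ)..r, τ s)
    (hmb : 2 * d * m ≤ ∫ s in r..d, τ s) :
    2 * d * F m ≤ (∫ s in (0:ℝ)..r, max (F (τ s) - F t₀) 0)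
      + ∫ s in r..d, (F (min (τ s) t₀) + F t₀ / t₀ * max (τ s - t₀) 0) := by
  classical
  set c := F t₀ with hc
  have hFn : ∀ σ : ℝ, 0 ≤ σ → 0 ≤ F σ := fun σ hσ => by
    have := hmono (mem_Ici.2 (le_refl (0:ℝ))) (mem_Ici.2 hσ) hσ
    linarith [hF0]
  have hc0 : 0 ≤ c := hFn t₀ ht₀
  set gL : ℝ → ℝ := fun σ => max (F (max σ 0) - c) 0 with hgL
  set gR : ℝ → ℝ := fun σ => F (min (max σ 0) t₀) + c / t₀ * max (σ - t₀) 0 with hgR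
  have hgLm : Monotone gL := by
    intro σ₁ σ₂ h
    refine max_le_max (sub_le_sub_right ?_ c) (le_refl 0)
    exact hmono (mem_Ici.2 (le_max_right _ _)) (mem_Ici.2 (le_max_right _ _))
      (max_le_max h (le_refl 0))
  have hgRm : Monotone gR := by
    intro σ₁ σ₂ h
    have h1 : F (min (max σ₁ 0) t₀) ≤ F (min (max σ₂ 0) t₀) :=
      hmono (mem_Ici.2 (le_min (le_max_right _ _) ht₀))
        (mem_Ici.2 (le_min (le_max_right _ _) ht₀))
        (min_le_min (max_le_max h (le_refl 0)) (le_refl t₀))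
    have h2 : c / t₀ * max (σ₁ - t₀) 0 ≤ c / t₀ * max (σ₂ - t₀) 0 :=
      mul_le_mul_of_nonneg_left (max_le_max (by linarith) (le_refl 0))
        (div_nonneg hc0 ht₀)
    exact add_le_add h1 h2
  have hmaxτ : ∀ s, max (τ s) 0 = τ s := fun s => max_eq_left (hτ0 s)
  have hgLτ : (fun s => max (F (τ s) - c) 0) = fun s => gL (τ s) := by
    funext s; rw [hgL]; simp only [hmaxτ]
  have hgRτ : (fun s => F (min (τ s) t₀) + c / t₀ * max (τ s - t₀) 0) = fun s => gR (τ s) := by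
    funext s; rw [hgR]; simp only [hmaxτ]
  set A := ∫ s in (0:ℝ)..r, τ s with hA
  set B := ∫ s in r..d, τ s with hB
  rw [hgLτ, hgRτ]
  set L := ∫ s in (0:ℝ)..r, gL (τ s) with hL
  set R := ∫ s in r..d, gR (τ s) with hR
  have hgLn : ∀ σ, 0 ≤ gL σ := fun σ => le_max_right _ _
  have hgRn : ∀ σ, 0 ≤ gR σ := fun σ => add_nonneg
    (hFn _ (le_min (le_max_right _ _) ht₀))
    (mul_nonneg (div_nonneg hc0 ht₀) (le_max_right _ _))
  have hiL : IntervalIntegrable (fun s => gL (τ s)) volume 0 r :=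
    mono_comp_intervalIntegrable hgLm hτc 0 r
  have hiR : IntervalIntegrable (fun s => gR (τ s)) volume r d :=
    mono_comp_intervalIntegrable hgRm hτc r d
  have hiτ : ∀ a b : ℝ, IntervalIntegrable τ volume a b := fun a b =>
    hτc.intervalIntegrable a b
  have hL0 : 0 ≤ L := integral_nonneg hr0 (fun s _ => hgLn _)
  have hR0 : 0 ≤ R := integral_nonneg hrd (fun s _ => hgRn _)
  -- affine integral computation helper
  have int_affine : ∀ a b p q : ℝ, ∫ s in a..b, (p + q * τ s) = (b - a) * p + q * (∫ s in a..b, τ s) := by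
    intro a b p q
    rw [integral_add (intervalIntegrable_const) ((hiτ a b).const_mul q),
      intervalIntegral.integral_const, intervalIntegral.integral_const_mul]
    simp [smul_eq_mul]
  -- chord : for t₀ ≤ σ,  c * σ ≤ t₀ * F σ
  have hchord : ∀ σ, t₀ ≤ σ → c * σ ≤ t₀ * F σ := by
    intro σ hσ
    rcases eq_or_lt_of_le (ht₀.trans hσ) with h0 | h0
    · -- σ = 0 hence t₀ = 0
      have ht00 : t₀ = 0 := le_antisymm (by linarith) ht₀
      rw [← h0, ht00, mul_zero, zero_mul]
    · have hθ : t₀ / σ ≤ 1 := div_le_one_of_le₀ hσ h0.le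
      have h1 := chord0 hconv hF0 (div_nonneg ht₀ h0.le) hθ h0.le
      rw [div_mul_cancel₀ _ (ne_of_gt h0)] at h1
      -- h1 : F t₀ ≤ t₀ / σ * F σ
      have h2 := mul_le_mul_of_nonneg_right h1 h0.le
      calc c * σ = F t₀ * σ := by rw [hc]
        _ ≤ t₀ / σ * F σ * σ := h2
        _ = t₀ * F σ := by field_simp
  -- linear-in-τ lower bound for t₀ * R
  have hRlin : c * B - c * t₀ * (d - r) ≤ t₀ * R := by
    have hpt : ∀ s ∈ Icc r d, c * t₀ * (-1) + c * τ s ≤ t₀ * gR (τ s) := by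
      intro s _
      have h1 : τ s - t₀ ≤ max (τ s - t₀) 0 := le_max_left _ _
      have h2 : 0 ≤ F (min (max (τ s) 0) t₀) := hFn _ (le_min (le_max_right _ _) ht₀)
      rcases eq_or_lt_of_le ht₀ with h0 | h0
      · have hcz : c = 0 := by rw [hc, ← h0, hF0]
        simp only [hcz, zero_mul, mul_zero, zero_div, zero_add, neg_zero, add_zero]
        nlinarith [mul_nonneg ht₀ (hgRn (τ s))]
      · have hdiv : t₀ * (c / t₀ * max (τ s - t₀) 0) = c * max (τ s - t₀) 0 := by
          field_simp
        have h3 : c * (τ s - t₀) ≤ c * max (τ s - t₀) 0 :=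
          mul_le_mul_of_nonneg_left h1 hc0
        have h4 : 0 ≤ t₀ * F (min (max (τ s) 0) t₀) := mul_nonneg ht₀ h2
        rw [hgR]
        calc c * t₀ * (-1) + c * τ s = c * (τ s - t₀) := by ring
          _ ≤ c * max (τ s - t₀) 0 := h3
          _ ≤ t₀ * F (min (max (τ s) 0) t₀) + c * max (τ s - t₀) 0 := by linarith
          _ = t₀ * (F (min (max (τ s) 0) t₀) + c / t₀ * max (τ s - t₀) 0) := by
              rw [mul_add, hdiv]
    have hInt := integral_mono_on hrd
      (intervalIntegrable_const.add ((hiτ r d).const_mul c))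
      (hiR.const_mul t₀) hpt
    rw [int_affine] at hInt
    rw [intervalIntegral.integral_const_mul] at hInt
    rw [← hR, ← hB] at hInt
    nlinarith [hInt]
  -- linear-in-τ lower bound for t₀ * L
  have hLlin : c * A - c * t₀ * r ≤ t₀ * L := by
    have hpt : ∀ s ∈ Icc (0:ℝ) r, c * t₀ * (-1) + c * τ s ≤ t₀ * gL (τ s) := by
      intro s _
      rcases le_total (τ s) t₀ with h | h
      · have h1 : c * τ s ≤ c * t₀ := mul_le_mul_of_nonneg_left h hc0
        have h2 : 0 ≤ t₀ * gL (τ s) := mul_nonneg ht₀ (hgLn _)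
        linarith
      · have h1 := hchord (τ s) h
        have h2 : F (τ s) - c ≤ gL (τ s) := by
          rw [hgL]; simp only [hmaxτ]; exact le_max_left _ _
        have h3 : t₀ * (F (τ s) - c) ≤ t₀ * gL (τ s) := mul_le_mul_of_nonneg_left h2 ht₀
        nlinarith
    have hInt := integral_mono_on hr0
      (intervalIntegrable_const.add ((hiτ 0 r).const_mul c))
      (hiL.const_mul t₀) hpt
    rw [int_affine, intervalIntegral.integral_const_mul, ← hL, ← hA] at hInt
    nlinarith [hInt]
  have hid : ∀ s, min (τ s) t₀ + max (τ s - t₀) 0 = τ s := by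
    intro s
    rcases le_total (τ s) t₀ with h | h
    · rw [min_eq_left h, max_eq_right (by linarith)]; ring
    · rw [min_eq_right h, max_eq_left (by linarith)]; ring
  rcases eq_or_lt_of_le hm0 with hmz | hm
  · rw [← hmz, hF0, mul_zero]; exact add_nonneg hL0 hR0
  rcases le_or_gt m t₀ with hmt | hmt
  · -- Case 1 : 0 < m ≤ t₀
    have ht₀pos : 0 < t₀ := lt_of_lt_of_le hm hmt
    have hFmchord : t₀ * F m ≤ m * c := by
      have h1 := chord0 hconv hF0 (div_nonneg hm0 ht₀) ((div_le_one ht₀pos).2 hmt) ht₀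
      rw [div_mul_cancel₀ _ (ne_of_gt ht₀pos)] at h1
      have h2 := mul_le_mul_of_nonneg_left h1 ht₀
      calc t₀ * F m ≤ t₀ * (m / t₀ * c) := h2
        _ = m * c := by field_simp
    rcases lt_or_ge ((d + r) * t₀) (2*d*m) with h1a | h1b
    · -- Case 1a
      have h2m : t₀ ≤ 2 * m := by nlinarith
      have key : t₀ * (2 * d * F m) ≤ t₀ * (L + R) := by
        have hA2 : c * (2*d*m) ≤ c * A := mul_le_mul_of_nonneg_left hma hc0
        have hB2 : c * (2*d*m) ≤ c * B := mul_le_mul_of_nonneg_left hmb hc0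
        have hFm2 : 2 * d * (t₀ * F m) ≤ 2 * d * (m * c) :=
          mul_le_mul_of_nonneg_left hFmchord (by linarith)
        have hcd : c * d * t₀ ≤ c * d * (2 * m) :=
          mul_le_mul_of_nonneg_left h2m (mul_nonneg hc0 hd.le)
        linarith [hLlin, hRlin, hA2, hB2, hFm2, hcd]
      exact (mul_le_mul_iff_of_pos_left ht₀pos).1 key
    · -- Case 1b
      obtain ⟨k, hk⟩ := exists_subgradient hconv hm
      have hkm : F m ≤ k * m := by
        have h0 := hk 0 (le_refl 0); rw [hF0] at h0; linarith [h0]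
      have hk0 : 0 ≤ k :=
        le_of_mul_le_mul_right (by linarith [(hFn m hm0).trans hkm] : 0 * m ≤ k * m) hm
      rcases le_or_gt (k * t₀) c with hkc | hkc
      · -- branch k·t₀ ≤ c
        have hR1 : (d - r) * (F m - k * m) + k * B ≤ R := by
          have hpt : ∀ s ∈ Icc r d, (F m - k * m) + k * τ s ≤ gR (τ s) := by
            intro s _
            have hmin0 : (0:ℝ) ≤ min (τ s) t₀ := le_min (hτ0 s) ht₀
            have hsup := hk (min (τ s) t₀) hmin0
            have hkdiv : k ≤ c / t₀ := (le_div_iff₀ ht₀pos).2 (by linarith)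
            have h2 : k * max (τ s - t₀) 0 ≤ c / t₀ * max (τ s - t₀) 0 :=
              mul_le_mul_of_nonneg_right hkdiv (le_max_right _ _)
            rw [hgR]; simp only [hmaxτ]
            nlinarith [hid s]
          have hInt := integral_mono_on hrd
            (intervalIntegrable_const.add ((hiτ r d).const_mul k)) hiR hpt
          rw [int_affine, ← hR, ← hB] at hInt
          linarith
        have hkB : k * (2*d*m) ≤ k * B := mul_le_mul_of_nonneg_left hmb hk0
        nlinarith [hL0, hR1]
      · -- branch k·t₀ > c
        have hsup := hk t₀ ht₀
        have hR2 : t₀ * (d - r) * (F m - k * m) + c * B ≤ t₀ * R := by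
          have hpt : ∀ s ∈ Icc r d, t₀ * (F m - k * m) + c * τ s ≤ t₀ * gR (τ s) := by
            intro s _
            have hmin0 : (0:ℝ) ≤ min (τ s) t₀ := le_min (hτ0 s) ht₀
            have hsupm := hk (min (τ s) t₀) hmin0
            have hdiv : t₀ * (c / t₀ * max (τ s - t₀) 0) = c * max (τ s - t₀) 0 := by
              field_simp
            have hck : c * min (τ s) t₀ ≤ k * t₀ * min (τ s) t₀ :=
              mul_le_mul_of_nonneg_right hkc.le hmin0
            have hsupm2 : t₀ * (F m + k * (min (τ s) t₀ - m)) ≤ t₀ * F (min (τ s) t₀) :=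
              mul_le_mul_of_nonneg_left hsupm ht₀
            rw [hgR]; simp only [hmaxτ]
            rw [mul_add, hdiv]
            nlinarith [hid s]
          have hInt := integral_mono_on hrd
            (intervalIntegrable_const.add ((hiτ r d).const_mul c))
            (hiR.const_mul t₀) hpt
          rw [int_affine, intervalIntegral.integral_const_mul, ← hR, ← hB] at hInt
          linarith
        have hbr : 0 ≤ (d + r) * t₀ - 2 * d * m := by linarith
        have hkbr : c * ((d + r) * t₀ - 2 * d * m) ≤ k * t₀ * ((d + r) * t₀ - 2 * d * m) :=
          mul_le_mul_of_nonneg_right hkc.le hbr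
        have hsup2 : (d + r) * t₀ * (F m + k * (t₀ - m)) ≤ (d + r) * t₀ * c :=
          mul_le_mul_of_nonneg_left hsup (by positivity)
        have hcB : c * (2*d*m) ≤ c * B := mul_le_mul_of_nonneg_left hmb hc0
        have key : t₀ * (2 * d * F m) ≤ t₀ * (L + R) := by
          have hL0' : 0 ≤ t₀ * L := mul_nonneg ht₀ hL0
          linarith [hR2, hcB, hkbr, hsup2, hL0']
        exact (mul_le_mul_iff_of_pos_left ht₀pos).1 key
  · -- Case 2 : t₀ < m
    set H : ℝ → ℝ := fun σ => F (σ + t₀) - c with hH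
    have hHconv : ConvexOn ℝ (Ici 0) H := convexOn_shift hconv ht₀
    have hH0 : H 0 = 0 := by simp [hH, hc]
    set z₀ : ℝ := m - r * t₀ / (2*d) with hz₀
    have hrt2d : r * t₀ / (2*d) ≤ t₀ / 2 := by
      rw [div_le_div_iff₀ (by linarith) (by norm_num)]
      nlinarith
    have hz₀pos : 0 < z₀ := by
      rw [hz₀]; nlinarith
    obtain ⟨κ, hκ⟩ := exists_subgradient hHconv hz₀pos
    have hκz : H z₀ ≤ κ * z₀ := by
      have h0 := hκ 0 (le_refl 0); rw [hH0] at h0; linarith [h0]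
    have hHz₀n : 0 ≤ H z₀ := by
      have h1 := hmono (mem_Ici.2 ht₀) (mem_Ici.2 (by linarith : (0:ℝ) ≤ z₀ + t₀))
        (by linarith : t₀ ≤ z₀ + t₀)
      rw [hH]; dsimp only; rw [hc]; linarith
    have hκ0 : 0 ≤ κ :=
      le_of_mul_le_mul_right (by linarith [hHz₀n.trans hκz] : 0 * z₀ ≤ κ * z₀) hz₀pos
    have hL2 : r * (H z₀ - κ * z₀ - κ * t₀) + κ * A ≤ L := by
      have hpt : ∀ s ∈ Icc (0:ℝ) r, (H z₀ - κ * z₀ - κ * t₀) + κ * τ s ≤ gL (τ s) := by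
        intro s _
        have hp : (0:ℝ) ≤ max (τ s - t₀) 0 := le_max_right _ _
        have hsup := hκ (max (τ s - t₀) 0) hp
        have hHg : H (max (τ s - t₀) 0) ≤ gL (τ s) := by
          rcases le_total (τ s) t₀ with h | h
          · rw [max_eq_right (by linarith), hH0]; exact hgLn _
          · rw [max_eq_left (by linarith)]
            have harg : τ s - t₀ + t₀ = τ s := by ring
            rw [hH]; dsimp only; rw [harg, hgL]; simp only [hmaxτ]
            exact le_max_left _ _
        have h2 : κ * (τ s - t₀) ≤ κ * max (τ s - t₀) 0 :=
          mul_le_mul_of_nonneg_left (le_max_left _ _) hκ0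
        nlinarith
      have hInt := integral_mono_on hr0
        (intervalIntegrable_const.add ((hiτ 0 r).const_mul κ)) hiL hpt
      rw [int_affine, ← hL, ← hA] at hInt
      linarith
    have hL3 : 2 * d * H z₀ ≤ L := by
      have h2dz : 2 * d * z₀ = 2 * d * m - r * t₀ := by
        rw [hz₀]; field_simp
      have h1 : κ * (2*d*m) ≤ κ * A := mul_le_mul_of_nonneg_left hma hκ0
      have h2 : (2*d - r) * H z₀ ≤ (2*d - r) * (κ * z₀) :=
        mul_le_mul_of_nonneg_left hκz (by linarith)
      nlinarith [hL2]
    have hHzF : 2 * d * F m - 2 * d * c + (2*d - r) * c ≤ 2 * d * H z₀ := by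
      rcases eq_or_lt_of_le ht₀ with ht0z | ht0pos
      · have hcz : c = 0 := by rw [hc, ← ht0z, hF0]
        have hzt : z₀ + t₀ = m := by rw [hz₀, ← ht0z]; ring
        rw [hH]; dsimp only; rw [hzt, hcz]; linarith
      · set Δ : ℝ := z₀ + t₀ - m with hΔ
        have hΔpos : 0 < Δ := by
          rw [hΔ, hz₀]
          have h1 : r * t₀ / (2*d) < t₀ := by
            rw [div_lt_iff₀ (by linarith)]; nlinarith
          linarith
        have hs0 : c * m ≤ t₀ * F m := hchord m (le_of_lt hmt)
        have hsl := hconv.slope_mono_adjacent (mem_Ici.2 (le_refl (0:ℝ)))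
          (mem_Ici.2 (by linarith : (0:ℝ) ≤ m + Δ)) hm (by linarith : m < m + Δ)
        rw [hF0] at hsl
        have hsl' : F m * Δ ≤ (F (m + Δ) - F m) * m := by
          rw [sub_zero, sub_zero, div_le_div_iff₀ hm (by linarith)] at hsl
          linarith
        have hzt : z₀ + t₀ = m + Δ := by rw [hΔ]; ring
        rw [hH]; dsimp only; rw [hzt]
        have h2dΔ : 2 * d * Δ = t₀ * (2*d - r) := by
          rw [hΔ, hz₀]; field_simp; ring
        have hq1 : t₀ * (F m * Δ) ≤ t₀ * ((F (m+Δ) - F m) * m) :=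
          mul_le_mul_of_nonneg_left hsl' ht₀
        have hq2 : (c * m) * Δ ≤ (t₀ * F m) * Δ := mul_le_mul_of_nonneg_right hs0 hΔpos.le
        have e1 : t₀ * (2*d - r) * (c * m) = 2 * d * Δ * (c * m) := by rw [← h2dΔ]
        have hq2' : 2 * d * ((c * m) * Δ) ≤ 2 * d * ((t₀ * F m) * Δ) :=
          mul_le_mul_of_nonneg_left hq2 (by linarith)
        have hq1' : 2 * d * (t₀ * (F m * Δ)) ≤ 2 * d * (t₀ * ((F (m+Δ) - F m) * m)) :=
          mul_le_mul_of_nonneg_left hq1 (by linarith)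
        have hcancel : ((2*d - r) * c) * (t₀ * m) ≤ (2 * d * (F (m+Δ) - F m)) * (t₀ * m) := by
          nlinarith [e1, hq2', hq1']
        have htm : 0 < t₀ * m := mul_pos ht0pos hm
        have hfin := le_of_mul_le_mul_right hcancel htm
        linarith
    rcases eq_or_lt_of_le ht₀ with ht0z | ht0pos
    · have hcz : c = 0 := by rw [hc, ← ht0z, hF0]
      nlinarith [hL3, hHzF, hR0]
    · have hRfin : t₀ * (c * (d + r)) ≤ t₀ * R := by
        have h1 : c * (2*d*m) ≤ c * B := mul_le_mul_of_nonneg_left hmb hc0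
        have h2 : (c * (2*d)) * t₀ ≤ (c * (2*d)) * m :=
          mul_le_mul_of_nonneg_left hmt.le (by positivity)
        nlinarith [hRlin]
      have hRge : c * (d + r) ≤ R := (mul_le_mul_iff_of_pos_left ht0pos).1 hRfin
      nlinarith [hL3, hHzF, hRge, hc0, hd, hr0]

end Row


section Meas

private lemma measurable_ofReal_comp {α : Type*} [MeasurableSpace α]
    {M : α → ℝ → ℝ} (hmono : ∀ x, MonotoneOn (M x) (Ici 0))
    (hconv : ∀ x, ConvexOn ℝ (Ici 0) (M x))
    (hmeas : ∀ s : ℝ, 0 ≤ s → Measurable fun x => M x s)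
    {t : α → ℝ} (ht : Measurable t) (ht0 : ∀ x, 0 ≤ t x) :
    Measurable fun x => ENNReal.ofReal (M x (t x)) := by
  have key : (fun x => ENNReal.ofReal (M x (t x))) = fun x =>
      ⨅ q : {q : ℚ // 0 < q},
        (if t x < ((q : ℚ) : ℝ) then ENNReal.ofReal (M x ((q : ℚ) : ℝ)) else ⊤) := by
    funext x
    refine le_antisymm (le_iInf fun q => ?_) ?_
    · have hq0 : (0:ℝ) ≤ ((q : ℚ) : ℝ) := by exact_mod_cast q.2.le
      split_ifs with h
      · exact ENNReal.ofReal_le_ofReal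
          (hmono x (mem_Ici.2 (ht0 x)) (mem_Ici.2 hq0) h.le)
      · exact le_top
    · refine ENNReal.le_of_forall_pos_le_add fun ε hε _ => ?_
      have hεpos : (0:ℝ) < (ε : ℝ) := hε
      set K := M x (t x + 1) - M x (t x) with hK
      have hK0 : 0 ≤ K := by
        have := hmono x (mem_Ici.2 (ht0 x)) (mem_Ici.2 (by linarith [ht0 x]))
          (by linarith : t x ≤ t x + 1)
        rw [hK]; linarith
      have hδpos : 0 < min 1 ((ε : ℝ) / (K + 1)) := lt_min one_pos (by positivity)
      obtain ⟨q, hq1, hq2⟩ := exists_rat_btwn (lt_add_of_pos_right (t x) hδpos)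
      have hq0 : (0:ℝ) < (q : ℝ) := lt_of_le_of_lt (ht0 x) hq1
      have hMq : M x (q : ℝ) ≤ M x (t x) + (ε : ℝ) := by
        set θ : ℝ := (q : ℝ) - t x with hθdef
        have hθ0 : 0 < θ := by rw [hθdef]; linarith
        have hθm : θ < min 1 ((ε : ℝ) / (K + 1)) := by rw [hθdef]; linarith
        have hθ1 : θ < 1 := lt_of_lt_of_le hθm (min_le_left _ _)
        have hcx := (hconv x).2 (mem_Ici.2 (ht0 x))
          (mem_Ici.2 (by linarith [ht0 x] : (0:ℝ) ≤ t x + 1))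
          (by linarith : (0:ℝ) ≤ 1 - θ) hθ0.le (by ring)
        have harg : (1 - θ) • t x + θ • (t x + 1) = (q : ℝ) := by
          simp only [smul_eq_mul]; rw [hθdef]; ring
        rw [harg] at hcx
        simp only [smul_eq_mul] at hcx
        have hθε : θ * (K + 1) ≤ (ε : ℝ) := by
          have h2 : θ ≤ (ε : ℝ) / (K + 1) := le_trans hθm.le (min_le_right _ _)
          calc θ * (K + 1) ≤ ((ε : ℝ) / (K + 1)) * (K + 1) :=
                mul_le_mul_of_nonneg_right h2 (by positivity)
            _ = (ε : ℝ) := by field_simp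
        nlinarith [hcx]
      have hmem : (0:ℚ) < q := by exact_mod_cast hq0
      calc (⨅ q : {q : ℚ // 0 < q},
          (if t x < ((q : ℚ) : ℝ) then ENNReal.ofReal (M x ((q : ℚ) : ℝ)) else ⊤))
          ≤ (if t x < ((q : ℚ) : ℝ) then ENNReal.ofReal (M x ((q : ℚ) : ℝ)) else ⊤) :=
            iInf_le _ (⟨q, hmem⟩ : {q : ℚ // 0 < q})
        _ = ENNReal.ofReal (M x (q : ℝ)) := by rw [if_pos hq1]
        _ ≤ ENNReal.ofReal (M x (t x) + (ε : ℝ)) := ENNReal.ofReal_le_ofReal hMq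
        _ ≤ ENNReal.ofReal (M x (t x)) + ENNReal.ofReal (ε : ℝ) := ENNReal.ofReal_add_le
        _ = ENNReal.ofReal (M x (t x)) + (ε : ℝ≥0∞) := by
            rw [ENNReal.ofReal_coe_nnreal]
  rw [key]
  refine Measurable.iInf fun q => ?_
  have hq0 : (0:ℝ) ≤ ((q : ℚ) : ℝ) := by exact_mod_cast q.2.le
  exact Measurable.ite (measurableSet_lt ht measurable_const)
    ((hmeas _ hq0).ennreal_ofReal) measurable_const

private lemma measurable_M_comp {α : Type*} [MeasurableSpace α]
    {M : α → ℝ → ℝ} (hmono : ∀ x, MonotoneOn (M x) (Ici 0))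
    (hconv : ∀ x, ConvexOn ℝ (Ici 0) (M x))
    (hmeas : ∀ s : ℝ, 0 ≤ s → Measurable fun x => M x s)
    (hMz : ∀ x, M x 0 = 0)
    {t : α → ℝ} (ht : Measurable t) (ht0 : ∀ x, 0 ≤ t x) :
    Measurable fun x => M x (t x) := by
  have h := measurable_ofReal_comp hmono hconv hmeas ht ht0
  have heq : (fun x => M x (t x)) = fun x => (ENNReal.ofReal (M x (t x))).toReal := by
    funext x
    rw [ENNReal.toReal_ofReal]
    have := hmono x (mem_Ici.2 (le_refl (0:ℝ))) (mem_Ici.2 (ht0 x)) (ht0 x)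
    linarith [hMz x]
  rw [heq]
  exact h.ennreal_toReal

end Meas


section Main

set_option maxHeartbeats 2000000

theorem poincare_Y0_up_down {N : ℕ} [NeZero N] (Ω : Set (Fin N → ℝ))
    (hΩo : IsOpen Ω) (hΩb : Bornology.IsBounded Ω) (d : ℝ) (hd : 0 < d)
    (hstrip : ∀ x ∈ Ω, x 0 ∈ Icc 0 d)
    (M : (Fin N → ℝ) → ℝ → ℝ) (hM : IsMusielakPhi M)
    (t₀ : ℝ) (ht₀ : 0 ≤ t₀)
    (hmono₁ : ∀ t, 0 ≤ t → t ≤ t₀ → ∀ x y : Fin N → ℝ,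
      (∀ i, i ≠ 0 → x i = y i) → x 0 ∈ Icc 0 d → y 0 ∈ Icc 0 d →
      x 0 ≤ y 0 → M x t ≤ M y t)
    (hmono₂ : ∀ t, t₀ < t → ∀ x y : Fin N → ℝ,
      (∀ i, i ≠ 0 → x i = y i) → x 0 ∈ Icc 0 d → y 0 ∈ Icc 0 d →
      x 0 ≤ y 0 → M y t ≤ M x t)
    (u : (Fin N → ℝ) → ℝ) (hu : ContDiff ℝ (⊤ : ℕ∞) u) (hcs : HasCompactSupport u)
    (hsupp : tsupport u ⊆ Ω) :
    ∫⁻ x in Ω, ENNReal.ofReal (M x |u x|) ≤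
      (1 / 2 : ℝ≥0∞) *
        ∫⁻ x in Ω, ENNReal.ofReal (M x (2 * d * |partialDeriv1 u x|)) := by
  classical
  obtain ⟨hM1, hM2, hM3, hM4, hM5, hM6, hM7, hM8⟩ := hM
  have h2d : (0:ℝ) < 2 * d := by linarith
  have hDc : Continuous (fun y => partialDeriv1 u y) := by
    unfold partialDeriv1
    exact (hu.continuous_fderiv (by simp)).clm_apply continuous_const
  have hudiff : Differentiable ℝ u := hu.differentiable (by simp)
  have hDcs : HasCompactSupport (fun y => partialDeriv1 u y) := by
    have h1 : HasCompactSupport (fderiv ℝ u) := hcs.fderiv (𝕜 := ℝ)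
    exact h1.comp_left (g := fun L : (Fin N → ℝ) →L[ℝ] ℝ => L (Pi.single 0 1)) (by simp)
  obtain ⟨C₀, hC₀⟩ := hDcs.exists_bound_of_continuous hDc
  have hC₀' : ∀ y, |partialDeriv1 u y| ≤ C₀ := by
    intro y; have := hC₀ y; rwa [Real.norm_eq_abs] at this
  set T : (Fin N → ℝ) → ℝ := fun y => 2 * d * |partialDeriv1 u y| with hT
  have hTc : Continuous T := continuous_const.mul hDc.abs
  have hT0 : ∀ y, 0 ≤ T y := fun y => by positivity
  set g : (Fin N → ℝ) → ℝ≥0∞ := fun y => ENNReal.ofReal (M y (T y)) with hg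
  have hgmeas : Measurable g := measurable_ofReal_comp hM1 hM2 hM5 hTc.measurable hT0
  have hMnn : ∀ (y : Fin N → ℝ) (σ : ℝ), 0 ≤ σ → 0 ≤ M y σ := fun y σ hσ => by
    have := hM1 y (mem_Ici.2 (le_refl (0:ℝ))) (mem_Ici.2 hσ) hσ
    linarith [hM3 y]
  have hΩIoo : ∀ x ∈ Ω, x 0 ∈ Ioo 0 d := by
    intro x hx
    obtain ⟨ε, hε, hball⟩ := Metric.isOpen_iff.1 hΩo x hx
    have hnear : ∀ v : ℝ, |v - x 0| < ε → (Function.update x 0 v) ∈ Ω := by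
      intro v hv
      apply hball
      rw [Metric.mem_ball, dist_pi_lt_iff hε]
      intro i
      rcases eq_or_ne i 0 with rfl | hi
      · rw [Function.update_self]; rwa [Real.dist_eq]
      · rw [Function.update_of_ne hi]; simpa using hε
    obtain ⟨h0, hd'⟩ := hstrip x hx
    constructor
    · rcases lt_or_eq_of_le h0 with h | h
      · exact h
      · exfalso
        have hmem := hnear (x 0 - ε/2)
          (by rw [show x 0 - ε/2 - x 0 = -(ε/2) by ring, abs_neg, abs_of_nonneg (by linarith)]
              linarith)
        have h2 := (hstrip _ hmem).1
        rw [Function.update_self] at h2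
        linarith
    · rcases lt_or_eq_of_le hd' with h | h
      · exact h
      · exfalso
        have hmem := hnear (x 0 + ε/2)
          (by rw [show x 0 + ε/2 - x 0 = ε/2 by ring, abs_of_nonneg (by linarith)]
              linarith)
        have h2 := (hstrip _ hmem).2
        rw [Function.update_self] at h2
        linarith
  set Strip : Set (Fin N → ℝ) := {y | y 0 ∈ Ioc 0 d} with hStrip
  have hStripMeas : MeasurableSet Strip := (measurable_pi_apply 0) measurableSet_Ioc
  have hΩStrip : Ω ⊆ Strip := fun x hx => ⟨(hΩIoo x hx).1, (hΩIoo x hx).2.le⟩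
  have hu0 : ∀ y : Fin N → ℝ, y 0 ∉ Ioo 0 d → u y = 0 := by
    intro y hy
    apply image_eq_zero_of_notMem_tsupport
    intro hmem
    exact hy (hΩIoo y (hsupp hmem))
  have hD0 : ∀ y, y ∉ Ω → partialDeriv1 u y = 0 := by
    intro y hy
    have hy' : y ∉ tsupport u := fun h => hy (hsupp h)
    have hev : u =ᶠ[nhds y] (fun _ => (0:ℝ)) := by
      filter_upwards [(isClosed_tsupport u).isOpen_compl.mem_nhds hy'] with z hz
      exact image_eq_zero_of_notMem_tsupport hz
    unfold partialDeriv1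
    rw [hev.fderiv_eq]
    simp
  have hupd_cont : ∀ x : Fin N → ℝ, Continuous fun s : ℝ => Function.update x 0 s :=
    fun x => continuous_const.update 0 continuous_id
  -- THE ROW INEQUALITY
  have row : ∀ x : Fin N → ℝ, x 0 ∈ Icc 0 d →
      ENNReal.ofReal (M x |u x|) ≤
        ENNReal.ofReal (1 / (2*d)) * ∫⁻ s in Ioc (0:ℝ) d, g (Function.update x 0 s) := by
    intro x hx
    set τ : ℝ → ℝ := fun s => T (Function.update x 0 s) with hτ
    have hτc : Continuous τ := hTc.comp (hupd_cont x)
    have hτ0 : ∀ s, 0 ≤ τ s := fun s => hT0 _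
    set W : ℝ → ℝ := fun s => M (Function.update x 0 s) (τ s) with hW
    have hWnn : ∀ s, 0 ≤ W s := fun s => hMnn _ _ (hτ0 s)
    have hWmeas : Measurable W := by
      rw [hW]
      exact measurable_M_comp (M := fun (s : ℝ) (σ : ℝ) => M (Function.update x 0 s) σ)
        (fun s => hM1 _) (fun s => hM2 _)
        (fun σ hσ => (hM5 σ hσ).comp (hupd_cont x).measurable)
        (fun s => hM3 _) hτc.measurable hτ0
    have hmemupd : ∀ s : ℝ, s ∈ Icc (0:ℝ) d → (Function.update x 0 s) 0 ∈ Icc (0:ℝ) d := by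
      intro s hs; rw [Function.update_self]; exact hs
    have hcoords : ∀ (s s' : ℝ) (i : Fin N), i ≠ 0 →
        Function.update x 0 s i = Function.update x 0 s' i := by
      intro s s' i hi; rw [Function.update_of_ne hi, Function.update_of_ne hi]
    have hcoordx : ∀ (s : ℝ) (i : Fin N), i ≠ 0 → Function.update x 0 s i = x i := by
      intro s i hi; rw [Function.update_of_ne hi]
    have hWb : ∀ s ∈ uIcc (0:ℝ) d, |W s| ≤
        M (Function.update x 0 d) t₀ + M (Function.update x 0 0) (max t₀ (2*d*C₀)) := by
      intro s hs
      rw [uIcc_of_le hd.le] at hs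
      have hyn : 0 ≤ M (Function.update x 0 d) t₀ := hMnn _ _ ht₀
      have hyn2 : 0 ≤ M (Function.update x 0 0) (max t₀ (2*d*C₀)) :=
        hMnn _ _ (le_trans ht₀ (le_max_left _ _))
      rw [abs_of_nonneg (hWnn s)]
      rcases le_or_gt (τ s) t₀ with h | h
      · have h1 : W s ≤ M (Function.update x 0 s) t₀ :=
          hM1 _ (mem_Ici.2 (hτ0 s)) (mem_Ici.2 ht₀) h
        have h2 : M (Function.update x 0 s) t₀ ≤ M (Function.update x 0 d) t₀ :=
          hmono₁ t₀ ht₀ (le_refl t₀) _ _ (hcoords s d) (hmemupd s hs)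
            (hmemupd d ⟨hd.le, le_refl d⟩)
            (by rw [Function.update_self, Function.update_self]; exact hs.2)
        linarith
      · have h1 : W s ≤ M (Function.update x 0 0) (τ s) :=
          hmono₂ (τ s) h _ _ (hcoords 0 s) (hmemupd 0 ⟨le_refl 0, hd.le⟩) (hmemupd s hs)
            (by rw [Function.update_self, Function.update_self]; exact hs.1)
        have hτb : τ s ≤ max t₀ (2*d*C₀) := by
          refine le_trans ?_ (le_max_right _ _)
          rw [hτ, hT]
          exact mul_le_mul_of_nonneg_left (hC₀' _) (by linarith)
        have h2 : M (Function.update x 0 0) (τ s) ≤ M (Function.update x 0 0) (max t₀ (2*d*C₀)) :=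
          hM1 _ (mem_Ici.2 (hτ0 s)) (mem_Ici.2 (le_trans (hτ0 s) hτb)) hτb
        linarith
    have hWint : ∀ a b : ℝ, a ∈ Icc (0:ℝ) d → b ∈ Icc (0:ℝ) d →
        IntervalIntegrable W volume a b := by
      intro a b ha hb
      refine intervalIntegrable_of_bounded hWmeas
        (C := M (Function.update x 0 d) t₀ + M (Function.update x 0 0) (max t₀ (2*d*C₀))) ?_
      intro s hs
      refine hWb s ?_
      rw [uIcc_of_le hd.le]
      exact uIcc_subset_Icc ha hb hs
    -- Fundamental theorem of calculus along the line
    have hps : ∀ s' : ℝ, x + (s' - x 0) • (Pi.single 0 1 : Fin N → ℝ) = Function.update x 0 s' := by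
      intro s'; funext i
      rcases eq_or_ne i 0 with rfl | hi
      · simp
      · simp [Function.update_of_ne hi, Pi.single_eq_of_ne hi]
    have hpath : ∀ s : ℝ, HasDerivAt (fun s' => u (Function.update x 0 s'))
        (partialDeriv1 u (Function.update x 0 s)) s := by
      intro s
      have hd1 : HasDerivAt (fun s' : ℝ => x + (s' - x 0) • (Pi.single 0 1 : Fin N → ℝ))
          ((Pi.single 0 1 : Fin N → ℝ)) s := by
        have h1 : HasDerivAt (fun s' : ℝ => s' - x 0) 1 s := (hasDerivAt_id s).sub_const _
        have h2 := (h1.smul_const ((Pi.single 0 1 : Fin N → ℝ))).const_add x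
        rwa [one_smul] at h2
      have hkey := (hudiff (x + (s - x 0) • (Pi.single 0 1 : Fin N → ℝ))).hasFDerivAt.comp_hasDerivAt s hd1
      simp only [hps] at hkey
      exact hkey
    have hDlc : Continuous fun s => partialDeriv1 u (Function.update x 0 s) :=
      hDc.comp (hupd_cont x)
    have hu₀ : u (Function.update x 0 0) = 0 := by
      apply hu0
      rw [Function.update_self]
      rintro ⟨h1, _⟩; exact lt_irrefl _ h1
    have hud : u (Function.update x 0 d) = 0 := by
      apply hu0
      rw [Function.update_self]
      rintro ⟨_, h2⟩; exact lt_irrefl _ h2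
    have hxupd : Function.update x 0 (x 0) = x := Function.update_eq_self 0 x
    have hFTC1 : ∫ s in (0:ℝ)..(x 0), partialDeriv1 u (Function.update x 0 s) = u x := by
      rw [intervalIntegral.integral_eq_sub_of_hasDerivAt (fun s _ => hpath s)
        (hDlc.intervalIntegrable _ _)]
      rw [hxupd, hu₀, sub_zero]
    have hFTC2 : ∫ s in (x 0)..d, partialDeriv1 u (Function.update x 0 s) = - u x := by
      rw [intervalIntegral.integral_eq_sub_of_hasDerivAt (fun s _ => hpath s)
        (hDlc.intervalIntegrable _ _)]
      rw [hxupd, hud, zero_sub]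
    have hτInt : ∀ a b : ℝ, ∫ s in a..b, τ s
        = 2 * d * ∫ s in a..b, |partialDeriv1 u (Function.update x 0 s)| := by
      intro a b
      simp only [hτ, hT]
      exact intervalIntegral.integral_const_mul _ _
    have habs1 : 2 * d * |u x| ≤ ∫ s in (0:ℝ)..(x 0), τ s := by
      have h1 : |u x| ≤ ∫ s in (0:ℝ)..(x 0), |partialDeriv1 u (Function.update x 0 s)| := by
        rw [← hFTC1]
        exact intervalIntegral.abs_integral_le_integral_abs hx.1
      rw [hτInt]
      exact mul_le_mul_of_nonneg_left h1 h2d.le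
    have habs2 : 2 * d * |u x| ≤ ∫ s in (x 0)..d, τ s := by
      have h1 : |u x| ≤ ∫ s in (x 0)..d, |partialDeriv1 u (Function.update x 0 s)| := by
        rw [show |u x| = |- u x| from (abs_neg _).symm, ← hFTC2]
        exact intervalIntegral.abs_integral_le_integral_abs hx.2
      rw [hτInt]
      exact mul_le_mul_of_nonneg_left h1 h2d.le
    have hrowR := abstract_row (hM2 x) (hM1 x) (hM3 x) ht₀ hd hx.1 hx.2
      (abs_nonneg (u x)) hτc hτ0 habs1 habs2
    -- pointwise comparison of budget integrands with W
    have hPL : ∀ s ∈ Icc (0:ℝ) (x 0), max (M x (τ s) - M x t₀) 0 ≤ W s := by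
      intro s hs
      have hsIcc : s ∈ Icc (0:ℝ) d := ⟨hs.1, le_trans hs.2 hx.2⟩
      rcases le_or_gt (τ s) t₀ with h | h
      · have h1 : M x (τ s) - M x t₀ ≤ 0 := by
          have := hM1 x (mem_Ici.2 (hτ0 s)) (mem_Ici.2 ht₀) h
          linarith
        exact max_le (le_trans h1 (hWnn s)) (hWnn s)
      · have h1 : M x (τ s) ≤ W s := by
          rw [hW]
          exact hmono₂ (τ s) h _ x (fun i hi => hcoordx s i hi) (hmemupd s hsIcc) hx
            (by rw [Function.update_self]; exact hs.2)
        have h2 : 0 ≤ M x t₀ := hMnn x t₀ ht₀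
        exact max_le (by linarith) (hWnn s)
    have hPR : ∀ s ∈ Icc (x 0) d,
        M x (min (τ s) t₀) + M x t₀ / t₀ * max (τ s - t₀) 0 ≤ W s := by
      intro s hs
      have hsIcc : s ∈ Icc (0:ℝ) d := ⟨le_trans hx.1 hs.1, hs.2⟩
      rcases le_or_gt (τ s) t₀ with h | h
      · rw [max_eq_right (by linarith), mul_zero, add_zero, min_eq_left h, hW]
        exact hmono₁ (τ s) (hτ0 s) h x _ (fun i hi => (hcoordx s i hi).symm) hx
          (hmemupd s hsIcc) (by rw [Function.update_self]; exact hs.1)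
      · rcases eq_or_lt_of_le ht₀ with ht0z | ht0pos
        · rw [min_eq_right (by linarith), ← ht0z, hM3 x]
          simpa using hWnn s
        · have hτpos : 0 < τ s := lt_of_le_of_lt ht₀ h
          have hcy : M x t₀ ≤ M (Function.update x 0 s) t₀ :=
            hmono₁ t₀ ht₀ (le_refl _) x _ (fun i hi => (hcoordx s i hi).symm) hx
              (hmemupd s hsIcc) (by rw [Function.update_self]; exact hs.1)
          have hch := chord0 (hM2 (Function.update x 0 s)) (hM3 (Function.update x 0 s))
            (div_nonneg ht₀ hτpos.le) ((div_le_one hτpos).2 h.le) hτpos.le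
          rw [div_mul_cancel₀ _ (ne_of_gt hτpos)] at hch
          have hch2 : M (Function.update x 0 s) t₀ * τ s ≤ t₀ * W s := by
            have := mul_le_mul_of_nonneg_right hch hτpos.le
            rw [hW]
            calc M (Function.update x 0 s) t₀ * τ s
                ≤ t₀ / τ s * M (Function.update x 0 s) (τ s) * τ s := this
              _ = t₀ * M (Function.update x 0 s) (τ s) := by field_simp
          have hrw : M x t₀ + M x t₀ / t₀ * max (τ s - t₀) 0 = M x t₀ * τ s / t₀ := by
            rw [max_eq_left (by linarith)]
            field_simp
            ring
          rw [min_eq_right h.le, hrw, div_le_iff₀ ht0pos]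
          have h2 : M x t₀ * τ s ≤ M (Function.update x 0 s) t₀ * τ s :=
            mul_le_mul_of_nonneg_right hcy hτpos.le
          linarith [hch2]
    -- integrability of the budget integrands
    have hgLint : IntervalIntegrable (fun s => max (M x (τ s) - M x t₀) 0) volume 0 (x 0) := by
      have hmono' : Monotone (fun σ : ℝ => max (M x (max σ 0) - M x t₀) 0) := by
        intro a b h
        exact max_le_max (sub_le_sub_right (hM1 x (mem_Ici.2 (le_max_right _ _))
          (mem_Ici.2 (le_max_right _ _)) (max_le_max h (le_refl 0))) _) (le_refl 0)
      have h2 := mono_comp_intervalIntegrable hmono' hτc 0 (x 0)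
      have heq : (fun s => max (M x (max (τ s) 0) - M x t₀) 0)
          = fun s => max (M x (τ s) - M x t₀) 0 := by
        funext s; rw [max_eq_left (hτ0 s)]
      rwa [heq] at h2
    have hgRint : IntervalIntegrable
        (fun s => M x (min (τ s) t₀) + M x t₀ / t₀ * max (τ s - t₀) 0) volume (x 0) d := by
      have hmono' : Monotone
          (fun σ : ℝ => M x (min (max σ 0) t₀) + M x t₀ / t₀ * max (σ - t₀) 0) := by
        intro a b h
        have h1 := hM1 x (mem_Ici.2 (le_min (le_max_right _ _) ht₀))
          (mem_Ici.2 (le_min (le_max_right _ _) ht₀))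
          (min_le_min (max_le_max h (le_refl 0)) (le_refl t₀))
        have h2 : M x t₀ / t₀ * max (a - t₀) 0 ≤ M x t₀ / t₀ * max (b - t₀) 0 :=
          mul_le_mul_of_nonneg_left (max_le_max (by linarith) (le_refl 0))
            (div_nonneg (hMnn x t₀ ht₀) ht₀)
        exact add_le_add h1 h2
      have h2 := mono_comp_intervalIntegrable hmono' hτc (x 0) d
      have heq : (fun s => M x (min (max (τ s) 0) t₀) + M x t₀ / t₀ * max (τ s - t₀) 0)
          = fun s => M x (min (τ s) t₀) + M x t₀ / t₀ * max (τ s - t₀) 0 := by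
        funext s; rw [max_eq_left (hτ0 s)]
      rwa [heq] at h2
    have hrow2 : 2 * d * M x |u x| ≤ ∫ s in (0:ℝ)..d, W s := by
      have hI1 := hWint 0 (x 0) ⟨le_refl 0, hd.le⟩ hx
      have hI2 := hWint (x 0) d hx ⟨hd.le, le_refl d⟩
      have hm1 := integral_mono_on hx.1 hgLint hI1 hPL
      have hm2 := integral_mono_on hx.2 hgRint hI2 hPR
      have hadd := intervalIntegral.integral_add_adjacent_intervals hI1 hI2
      linarith [hrowR]
    have hIoc : IntegrableOn W (Ioc (0:ℝ) d) volume :=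
      (intervalIntegrable_iff_integrableOn_Ioc_of_le hd.le).1
        (hWint 0 d ⟨le_refl 0, hd.le⟩ ⟨hd.le, le_refl d⟩)
    have hofReal : ENNReal.ofReal (∫ s in Ioc (0:ℝ) d, W s)
        = ∫⁻ s in Ioc (0:ℝ) d, ENNReal.ofReal (W s) :=
      ofReal_integral_eq_lintegral_ofReal hIoc (ae_of_all _ hWnn)
    have hle : M x |u x| ≤ (1/(2*d)) * ∫ s in Ioc (0:ℝ) d, W s := by
      have h3 : ∫ s in (0:ℝ)..d, W s = ∫ s in Ioc (0:ℝ) d, W s :=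
        intervalIntegral.integral_of_le hd.le
      rw [← h3]
      have h4 := mul_le_mul_of_nonneg_left hrow2 (le_of_lt (show (0:ℝ) < 1/(2*d) by positivity))
      have h5 : (1/(2*d)) * (2*d*M x |u x|) = M x |u x| := by field_simp
      linarith
    calc ENNReal.ofReal (M x |u x|)
        ≤ ENNReal.ofReal ((1/(2*d)) * ∫ s in Ioc (0:ℝ) d, W s) := ENNReal.ofReal_le_ofReal hle
      _ = ENNReal.ofReal (1/(2*d)) * ENNReal.ofReal (∫ s in Ioc (0:ℝ) d, W s) :=
          ENNReal.ofReal_mul (by positivity)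
      _ = ENNReal.ofReal (1/(2*d)) * ∫⁻ s in Ioc (0:ℝ) d, g (Function.update x 0 s) := by
          rw [hofReal]
  -- step 1 : to the strip
  have step1 : ∫⁻ x in Ω, ENNReal.ofReal (M x |u x|)
      ≤ ∫⁻ x in Strip, ENNReal.ofReal (M x |u x|) :=
    lintegral_mono' (Measure.restrict_mono hΩStrip le_rfl) le_rfl
  set Φ : (Fin N → ℝ) → ℝ≥0∞ := fun x => ∫⁻ s in Ioc (0:ℝ) d, g (Function.update x 0 s) with hΦ
  have step2 : ∫⁻ x in Strip, ENNReal.ofReal (M x |u x|) ≤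
      ENNReal.ofReal (1/(2*d)) * ∫⁻ x in Strip, Φ x := by
    calc ∫⁻ x in Strip, ENNReal.ofReal (M x |u x|)
        ≤ ∫⁻ x in Strip, ENNReal.ofReal (1/(2*d)) * Φ x := by
          apply lintegral_mono_ae
          filter_upwards [ae_restrict_mem hStripMeas] with x hx
          exact row x ⟨le_of_lt hx.1, hx.2⟩
      _ = _ := lintegral_const_mul' _ _ ENNReal.ofReal_ne_top
  -- product structure
  set ψ : (Fin N → ℝ) ≃ᵐ (ℝ × ({i : Fin N // ¬ i = 0} → ℝ)) :=
    (MeasurableEquiv.piEquivPiSubtypeProd (fun _ : Fin N => ℝ) (fun i => i = 0)).trans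
      ((MeasurableEquiv.funUnique {i : Fin N // i = 0} ℝ).prodCongr (MeasurableEquiv.refl _))
    with hψdef
  have hψmp : MeasurePreserving ψ volume volume := by
    rw [hψdef]
    refine MeasurePreserving.trans
      (volume_preserving_piEquivPiSubtypeProd (fun _ : Fin N => ℝ) (fun i => i = 0)) ?_
    have h3 := (volume_preserving_funUnique {i : Fin N // i = 0} ℝ).prod
      (MeasurePreserving.id (volume : Measure ({i : Fin N // ¬ i = 0} → ℝ)))
    rw [← Measure.volume_eq_prod, ← Measure.volume_eq_prod] at h3
    have hinst : (Unique.fintype : Fintype {i : Fin N // i = 0})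
        = (Subtype.fintype fun i : Fin N => i = 0) := Subsingleton.elim _ _
    rw [hinst] at h3
    exact h3
  have hψsymm : ∀ (p : ℝ × ({i : Fin N // ¬ i = 0} → ℝ)) (i : Fin N),
      ψ.symm p i = if h : i = 0 then p.1 else p.2 ⟨i, h⟩ := by
    intro p i
    rw [hψdef]
    rfl
  have hψ0 : ∀ p, ψ.symm p 0 = p.1 := fun p => by rw [hψsymm p 0]; simp
  have hupdψ : ∀ (p : ℝ × ({i : Fin N // ¬ i = 0} → ℝ)) (s : ℝ),
      Function.update (ψ.symm p) 0 s = ψ.symm (s, p.2) := by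
    intro p s
    funext i
    rw [Function.update_apply, hψsymm, hψsymm]
    rcases eq_or_ne i 0 with rfl | hi
    · simp
    · simp [hi]
  have hψfst : ∀ x : Fin N → ℝ, (ψ x).1 = x 0 := by
    intro x
    have h1 := hψ0 (ψ x)
    rw [MeasurableEquiv.symm_apply_apply] at h1
    exact h1.symm
  have hupdmeas : Measurable fun z : (Fin N → ℝ) × ℝ => Function.update z.1 0 z.2 := by
    apply measurable_pi_lambda
    intro i
    rcases eq_or_ne i 0 with rfl | hi
    · simp only [Function.update_self]; exact measurable_snd
    · simp only [Function.update_of_ne hi]; exact (measurable_pi_apply i).comp measurable_fst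
  have hΦmeas : Measurable Φ := by
    have hGm : Measurable fun z : (Fin N → ℝ) × ℝ =>
        (if z.2 ∈ Ioc (0:ℝ) d then g (Function.update z.1 0 z.2) else 0) := by
      refine Measurable.ite ?_ (hgmeas.comp hupdmeas) measurable_const
      exact measurable_snd measurableSet_Ioc
    have h1 : Measurable fun x : Fin N → ℝ =>
        ∫⁻ s : ℝ, (if s ∈ Ioc (0:ℝ) d then g (Function.update x 0 s) else 0) :=
      Measurable.lintegral_prod_right' hGm
    have heq : Φ = fun x => ∫⁻ s, (if s ∈ Ioc (0:ℝ) d then g (Function.update x 0 s) else 0) := by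
      funext x
      show (∫⁻ s in Ioc (0:ℝ) d, g (Function.update x 0 s))
          = ∫⁻ s, (if s ∈ Ioc (0:ℝ) d then g (Function.update x 0 s) else 0)
      rw [← lintegral_indicator measurableSet_Ioc]
      apply lintegral_congr
      intro s
      rw [Set.indicator_apply]
    rw [heq]
    exact h1
  have hSind : ∀ h : (Fin N → ℝ) → ℝ≥0∞,
      ∫⁻ x in Strip, h x = ∫⁻ x, (if x 0 ∈ Ioc (0:ℝ) d then h x else 0) := by
    intro h
    rw [← lintegral_indicator hStripMeas]
    apply lintegral_congr
    intro x
    rw [Set.indicator_apply]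
    by_cases hx : x 0 ∈ Ioc (0:ℝ) d
    · rw [if_pos hx, if_pos (by exact hx)]
    · rw [if_neg hx, if_neg (by exact hx)]
  set C : ({i : Fin N // ¬ i = 0} → ℝ) → ℝ≥0∞ :=
    fun w => ∫⁻ s in Ioc (0:ℝ) d, g (ψ.symm (s, w)) with hC
  have hq : Measurable fun p : ℝ × ({i : Fin N // ¬ i = 0} → ℝ) =>
      (if p.1 ∈ Ioc (0:ℝ) d then g (ψ.symm p) else 0) := by
    refine Measurable.ite ?_ (hgmeas.comp ψ.symm.measurable) measurable_const
    exact measurable_fst measurableSet_Ioc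
  have key1 : ∫⁻ x in Strip, Φ x = ENNReal.ofReal d * ∫⁻ x in Strip, g x := by
    have hmeas2 : Measurable fun p : ℝ × ({i : Fin N // ¬ i = 0} → ℝ) =>
        (if p.1 ∈ Ioc (0:ℝ) d then C p.2 else 0) := by
      refine Measurable.ite (measurable_fst measurableSet_Ioc) ?_ measurable_const
      have hCm : Measurable C := by
        have hGm : Measurable fun z : ({i : Fin N // ¬ i = 0} → ℝ) × ℝ =>
            (if z.2 ∈ Ioc (0:ℝ) d then g (ψ.symm (z.2, z.1)) else 0) := by
          refine Measurable.ite (measurable_snd measurableSet_Ioc) ?_ measurable_const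
          exact (hgmeas.comp ψ.symm.measurable).comp (measurable_snd.prodMk measurable_fst)
        have h1 : Measurable fun w : {i : Fin N // ¬ i = 0} → ℝ =>
            ∫⁻ s : ℝ, (if s ∈ Ioc (0:ℝ) d then g (ψ.symm (s, w)) else 0) :=
          Measurable.lintegral_prod_right' hGm
        have heq : C = fun w => ∫⁻ s, (if s ∈ Ioc (0:ℝ) d then g (ψ.symm (s, w)) else 0) := by
          funext w
          show (∫⁻ s in Ioc (0:ℝ) d, g (ψ.symm (s, w)))
              = ∫⁻ s, (if s ∈ Ioc (0:ℝ) d then g (ψ.symm (s, w)) else 0)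
          rw [← lintegral_indicator measurableSet_Ioc]
          apply lintegral_congr
          intro s
          rw [Set.indicator_apply]
        rw [heq]
        exact h1
      exact hCm.comp measurable_snd
    have hmeasStep : Measurable fun x : Fin N → ℝ =>
        (if x 0 ∈ Ioc (0:ℝ) d then Φ x else 0) :=
      Measurable.ite ((measurable_pi_apply 0) measurableSet_Ioc) hΦmeas measurable_const
    calc ∫⁻ x in Strip, Φ x
        = ∫⁻ x, (if x 0 ∈ Ioc (0:ℝ) d then Φ x else 0) := hSind Φ
      _ = ∫⁻ p, (if (ψ.symm p) 0 ∈ Ioc (0:ℝ) d then Φ (ψ.symm p) else 0) ∂volume :=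
          ((MeasurePreserving.symm ψ hψmp).lintegral_comp hmeasStep).symm
      _ = ∫⁻ p : ℝ × ({i : Fin N // ¬ i = 0} → ℝ),
            (if p.1 ∈ Ioc (0:ℝ) d then C p.2 else 0) ∂volume := by
          apply lintegral_congr
          intro p
          rw [hψ0 p]
          by_cases hp : p.1 ∈ Ioc (0:ℝ) d
          · rw [if_pos hp, if_pos hp]
            simp only [hΦ, hC]
            apply lintegral_congr
            intro s
            rw [hupdψ p s]
          · rw [if_neg hp, if_neg hp]
      _ = ∫⁻ v, ∫⁻ w, (if v ∈ Ioc (0:ℝ) d then C w else 0) ∂volume ∂volume := by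
          rw [Measure.volume_eq_prod, lintegral_prod _ hmeas2.aemeasurable]
      _ = ∫⁻ v, (if v ∈ Ioc (0:ℝ) d then (∫⁻ w, C w ∂volume) else 0) ∂volume := by
          apply lintegral_congr
          intro v
          by_cases hv : v ∈ Ioc (0:ℝ) d
          · rw [if_pos hv]
            apply lintegral_congr
            intro w
            rw [if_pos hv]
          · rw [if_neg hv]
            simp [hv]
      _ = (∫⁻ w, C w ∂volume) * ENNReal.ofReal d := by
          have heq2 : (fun v : ℝ => (if v ∈ Ioc (0:ℝ) d then (∫⁻ w, C w ∂volume) else 0))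
              = (Ioc (0:ℝ) d).indicator (fun _ => ∫⁻ w, C w ∂volume) := by
            funext v
            rw [Set.indicator_apply]
          rw [heq2, lintegral_indicator measurableSet_Ioc, setLIntegral_const,
            Real.volume_Ioc, sub_zero]
      _ = ENNReal.ofReal d * ∫⁻ x in Strip, g x := by
          rw [mul_comm]
          congr 1
          -- ∫⁻ w, C w = ∫⁻ x in Strip, g x
          calc ∫⁻ w, C w ∂volume
              = ∫⁻ w, ∫⁻ s, (if s ∈ Ioc (0:ℝ) d then g (ψ.symm (s, w)) else 0) ∂volume ∂volume := by
                apply lintegral_congr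
                intro w
                simp only [hC]
                rw [← lintegral_indicator measurableSet_Ioc]
                apply lintegral_congr
                intro s
                rw [Set.indicator_apply]
            _ = ∫⁻ s, ∫⁻ w, (if s ∈ Ioc (0:ℝ) d then g (ψ.symm (s, w)) else 0) ∂volume ∂volume := by
                apply lintegral_lintegral_swap
                exact (hq.comp (measurable_snd.prodMk measurable_fst)).aemeasurable
            _ = ∫⁻ p : ℝ × ({i : Fin N // ¬ i = 0} → ℝ),
                  (if p.1 ∈ Ioc (0:ℝ) d then g (ψ.symm p) else 0) ∂(volume.prod volume) :=
                (lintegral_prod _ hq.aemeasurable).symm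
            _ = ∫⁻ p, (if p.1 ∈ Ioc (0:ℝ) d then g (ψ.symm p) else 0) ∂volume := by
                rw [← Measure.volume_eq_prod]
            _ = ∫⁻ x, (if (ψ x).1 ∈ Ioc (0:ℝ) d then g (ψ.symm (ψ x)) else 0) ∂volume :=
                (hψmp.lintegral_comp hq).symm
            _ = ∫⁻ x, (if x 0 ∈ Ioc (0:ℝ) d then g x else 0) ∂volume := by
                apply lintegral_congr
                intro x
                rw [hψfst, MeasurableEquiv.symm_apply_apply]
            _ = ∫⁻ x in Strip, g x := (hSind g).symm
  have hgΩ : ∫⁻ x in Strip, g x = ∫⁻ x in Ω, g x := by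
    have hz : ∀ y, y ∉ Ω → g y = 0 := by
      intro y hy
      have hTz : T y = 0 := by simp only [hT]; rw [hD0 y hy]; simp
      simp only [hg, hTz, hM3 y, ENNReal.ofReal_zero]
    have hind : g = Ω.indicator g := by
      funext y
      by_cases hy : y ∈ Ω
      · rw [Set.indicator_of_mem hy]
      · rw [Set.indicator_of_notMem hy, hz y hy]
    conv_lhs => rw [hind]
    rw [lintegral_indicator hΩo.measurableSet, Measure.restrict_restrict hΩo.measurableSet,
      inter_eq_self_of_subset_left hΩStrip]
  have hfinal : ENNReal.ofReal (1/(2*d)) * ENNReal.ofReal d = 1/2 := by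
    rw [← ENNReal.ofReal_mul (by positivity)]
    rw [show (1/(2*d)) * d = 1/2 by field_simp]
    rw [ENNReal.ofReal_div_of_pos (by norm_num)]
    norm_num
  calc ∫⁻ x in Ω, ENNReal.ofReal (M x |u x|)
      ≤ ∫⁻ x in Strip, ENNReal.ofReal (M x |u x|) := step1
    _ ≤ ENNReal.ofReal (1/(2*d)) * ∫⁻ x in Strip, Φ x := step2
    _ = ENNReal.ofReal (1/(2*d)) * (ENNReal.ofReal d * ∫⁻ x in Ω, g x) := by rw [key1, hgΩ]
    _ = (1/2 : ℝ≥0∞) * ∫⁻ x in Ω, g x := by rw [← mul_assoc, hfinal]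
    _ = (1/2 : ℝ≥0∞) * ∫⁻ x in Ω, ENNReal.ofReal (M x (2 * d * |partialDeriv1 u x|)) := by
        exact congrArg _ (lintegral_congr fun x => rfl)

end Main
end

section
/- Let Ω ⊂ ℝ^N be a bounded open set contained in [0,d] × ℝ^{N-1}, and let M be a Musielak Φ-function for which there exists t₀ ≥ 0 such that for each x', x₁ ↦ M((x₁,x'),t) is non-increasing when t ≤ t₀ and non-decreasing when t > t₀. Then for every u ∈ C_c^∞(Ω), ∫_Ω M(x,|u(x)|) dx ≤ (1/2) ∫_Ω M(x, 2d·|∂₁u(x)|) dx. -/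
open MeasureTheory Filter Set ENNReal

lemma measurable_comp_right {α : Type*} [MeasurableSpace α] (φ : α → ℝ → ℝ)
    (hφ : ∀ s : ℝ, 0 ≤ s → Measurable fun x => φ x s)
    (hcont : ∀ x, ContinuousOn (φ x) (Ici 0))
    {f : α → ℝ} (hf : Measurable f) (hf0 : ∀ x, 0 ≤ f x) :
    Measurable fun x => φ x (f x) := by
  have hstep : ∀ n : ℕ, Measurable fun x => φ x ((⌊f x * 2 ^ n⌋₊ : ℝ) / 2 ^ n) := by
    intro n
    have hF : Measurable fun p : α × ℕ => φ p.1 ((p.2 : ℝ) / 2 ^ n) :=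
      measurable_from_prod_countable_left fun k =>
        hφ ((k : ℝ) / 2 ^ n) (by positivity)
    exact hF.comp (measurable_id.prodMk ((hf.mul measurable_const).nat_floor))
  apply measurable_of_tendsto_metrizable hstep
  rw [tendsto_pi_nhds]
  intro x
  have hmem : ∀ n : ℕ, ((⌊f x * 2 ^ n⌋₊ : ℝ) / 2 ^ n) ∈ Ici (0:ℝ) := fun n => by simp only [mem_Ici]; positivity
  have htend : Tendsto (fun n : ℕ => (⌊f x * 2 ^ n⌋₊ : ℝ) / 2 ^ n) atTop (nhds (f x)) := by
    have h1 : ∀ n : ℕ, f x - 1 / 2 ^ n ≤ (⌊f x * 2 ^ n⌋₊ : ℝ) / 2 ^ n := by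
      intro n
      rw [sub_le_iff_le_add, ← add_div, le_div_iff₀ (by positivity)]
      have := (Nat.lt_floor_add_one (f x * 2 ^ n)).le
      nlinarith [this]
    have h2 : ∀ n : ℕ, (⌊f x * 2 ^ n⌋₊ : ℝ) / 2 ^ n ≤ f x := by
      intro n
      rw [div_le_iff₀ (by positivity)]
      exact Nat.floor_le (mul_nonneg (hf0 x) (by positivity))
    have hlo : Tendsto (fun n : ℕ => f x - 1 / 2 ^ n) atTop (nhds (f x)) := by
      have : Tendsto (fun n : ℕ => (1:ℝ) / 2 ^ n) atTop (nhds 0) := by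
        simpa [one_div] using (tendsto_pow_atTop_nhds_zero_of_lt_one (by norm_num : (0:ℝ) ≤ 2⁻¹) (by norm_num)).comp tendsto_id
      simpa using (tendsto_const_nhds (x := f x)).sub this
    exact tendsto_of_tendsto_of_tendsto_of_le_of_le hlo tendsto_const_nhds h1 h2
  have := (hcont x (f x) (hf0 x)).tendsto.comp
    (tendsto_nhdsWithin_of_tendsto_nhds_of_eventually_within _ htend (Eventually.of_forall hmem))
  exact this

lemma phi_continuousOn {Φ : ℝ → ℝ} (hconv : ConvexOn ℝ (Ici 0) Φ) (h0 : Φ 0 = 0)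
    (hlim : Tendsto (fun s => Φ s / s) (nhdsWithin 0 (Ioi 0)) (nhds 0)) :
    ContinuousOn Φ (Ici 0) := by
  have hIoi : ContinuousOn Φ (Ioi 0) :=
    (hconv.subset Ioi_subset_Ici_self (convex_Ioi 0)).continuousOn isOpen_Ioi
  intro s hs
  rcases eq_or_lt_of_le (mem_Ici.mp hs) with h | h
  · -- s = 0
    subst h
    have h1 : Tendsto Φ (nhdsWithin 0 (Ioi 0)) (nhds 0) := by
      have : Tendsto (fun s => Φ s / s * s) (nhdsWithin 0 (Ioi 0)) (nhds 0) := by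
        have h2 : Tendsto (fun s : ℝ => s) (nhdsWithin 0 (Ioi 0)) (nhds 0) :=
          tendsto_id.mono_left nhdsWithin_le_nhds
        simpa using hlim.mul h2
      refine this.congr' ?_
      filter_upwards [self_mem_nhdsWithin] with t ht
      field_simp [ne_of_gt (mem_Ioi.mp ht)]
    have : Tendsto Φ (nhdsWithin 0 (Ici 0)) (nhds 0) := by
      rw [show Ici (0:ℝ) = {0} ∪ Ioi 0 by ext t; simp [le_iff_eq_or_lt, eq_comm],
        nhdsWithin_union]
      rw [tendsto_sup]
      constructor
      · simpa [nhdsWithin_singleton, h0] using tendsto_pure_nhds Φ (0:ℝ)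
      · exact h1
    simpa [ContinuousWithinAt, h0] using this
  · exact ((hIoi.continuousAt (Ioi_mem_nhds h)).continuousWithinAt)

lemma phi_nonneg {Φ : ℝ → ℝ} (hmono : MonotoneOn Φ (Ici 0)) (h0 : Φ 0 = 0)
    {s : ℝ} (hs : 0 ≤ s) : 0 ≤ Φ s := by
  simpa [h0] using hmono (self_mem_Ici) (mem_Ici.mpr hs) hs

lemma jensen_musielak {Φ : ℝ → ℝ} (hconv : ConvexOn ℝ (Ici 0) Φ)
    (h0 : Φ 0 = 0) (hcont : ContinuousOn Φ (Ici 0))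
    {E : Set ℝ} (hE : MeasurableSet E) {r : ℝ} (hr : 0 < r) (hEr : volume E ≤ ENNReal.ofReal r)
    {h : ℝ → ℝ} (hmeas : Measurable h) (hΦh : Measurable fun t => Φ (h t))
    (hh0 : ∀ t, 0 ≤ h t) (hhi : IntegrableOn h E)
    (hΦi : IntegrableOn (fun t => Φ (h t)) E) :
    Φ (r⁻¹ * ∫ t in E, h t) ≤ r⁻¹ * ∫ t in E, Φ (h t) := by
  classical
  set E' : Set ℝ := E \ {0} with hE'def
  have hE' : MeasurableSet E' := hE.diff (measurableSet_singleton 0)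
  have hvol : volume E' = volume E := measure_diff_null (by simp)
  have hEE' : E' =ᵐ[volume] E := diff_null_ae_eq_self (by simp)
  set c : ℝ≥0∞ := ENNReal.ofReal r - volume E with hcdef
  set μ : Measure ℝ := volume.restrict E' + c • Measure.dirac 0 with hμdef
  have hEfin : volume E < ⊤ := lt_of_le_of_lt hEr (by simp)
  have hμuniv : μ univ = ENNReal.ofReal r := by
    simp only [hμdef, Measure.add_apply, Measure.restrict_apply MeasurableSet.univ,
      univ_inter, Measure.smul_apply, measure_univ, smul_eq_mul,
      mul_one, hvol, hcdef]
    exact add_tsub_cancel_of_le hEr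
  have : IsFiniteMeasure μ := ⟨by rw [hμuniv]; exact ofReal_lt_top⟩
  have : NeZero μ :=
    ⟨MeasureTheory.Measure.measure_univ_ne_zero.mp
      (by rw [hμuniv]; exact (ENNReal.ofReal_pos.mpr hr).ne')⟩
  set f : ℝ → ℝ := E'.indicator h with hfdef
  have hf0 : f 0 = 0 := by simp [hfdef, hE'def]
  have hΦf : (fun t => Φ (f t)) = E'.indicator (fun t => Φ (h t)) := by
    funext t
    by_cases ht : t ∈ E' <;> simp [hfdef, indicator, ht, h0]
  -- integrability of f wrt μ
  have hfivol : Integrable f volume := by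
    rw [hfdef, integrable_indicator_iff hE']
    exact hhi.mono_set diff_subset
  have hfiE' : Integrable f (volume.restrict E') := hfivol.restrict
  have hfdirac : Integrable f (c • Measure.dirac 0) := by
    refine ⟨(hmeas.indicator hE').aestronglyMeasurable, ?_⟩
    rw [hasFiniteIntegral_def, lintegral_smul_measure,
      lintegral_dirac' _ (hmeas.indicator hE').enorm]
    have h00 : (0:ℝ) ∉ E' := by simp [hE'def]
    simp [Set.indicator_of_notMem h00]
  have hfi : Integrable f μ := by
    rw [hμdef, integrable_add_measure]
    exact ⟨hfiE', hfdirac⟩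
  have hΦfivol : Integrable (fun t => Φ (f t)) volume := by
    rw [hΦf, integrable_indicator_iff hE']
    exact hΦi.mono_set diff_subset
  have hΦfiE' : Integrable (fun t => Φ (f t)) (volume.restrict E') := hΦfivol.restrict
  have hΦfdirac : Integrable (fun t => Φ (f t)) (c • Measure.dirac 0) := by
    rw [hΦf]
    refine ⟨(hΦh.indicator hE').aestronglyMeasurable, ?_⟩
    rw [hasFiniteIntegral_def, lintegral_smul_measure,
      lintegral_dirac' _ (hΦh.indicator hE').enorm]
    have h00 : (0:ℝ) ∉ E' := by simp [hE'def]
    simp [Set.indicator_of_notMem h00]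
  have hΦfi : Integrable (fun t => Φ (f t)) μ := by
    rw [hμdef, integrable_add_measure]
    exact ⟨hΦfiE', hΦfdirac⟩
  have hfs : ∀ᵐ t ∂μ, f t ∈ Ici (0:ℝ) := by
    refine Eventually.of_forall fun t => ?_
    by_cases ht : t ∈ E' <;> simp [hfdef, indicator, ht, hh0 t, mem_Ici, le_refl]
  have hjensen := hconv.map_average_le hcont isClosed_Ici hfs hfi hΦfi
  -- compute the averages
  have hcr : c.toReal • (0:ℝ) = 0 := by simp
  have hintf : ∫ t, f t ∂μ = ∫ t in E, h t := by
    rw [hμdef, integral_add_measure hfiE' hfdirac, integral_smul_measure, integral_dirac' _ _ (hmeas.indicator hE').stronglyMeasurable]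
    simp only [← hfdef, hf0, smul_zero, add_zero]
    rw [hfdef, integral_indicator hE', Measure.restrict_restrict hE', inter_self]
    exact setIntegral_congr_set hEE'
  have hintΦf : ∫ t, Φ (f t) ∂μ = ∫ t in E, Φ (h t) := by
    rw [hμdef, integral_add_measure hΦfiE' hΦfdirac, integral_smul_measure,
      integral_dirac' _ _ (by rw [hΦf]; exact (hΦh.indicator hE').stronglyMeasurable)]
    simp only [← hfdef, hf0, h0, smul_zero, add_zero]
    rw [hΦf, integral_indicator hE', Measure.restrict_restrict hE', inter_self]
    exact setIntegral_congr_set hEE'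
  rw [average_eq, average_eq, measureReal_def, hμuniv, hintf, hintΦf, toReal_ofReal hr.le,
    smul_eq_mul, smul_eq_mul] at hjensen
  exact hjensen

lemma key_jensen (d : ℝ) (hd : 0 < d) {g W : ℝ → ℝ} (hg : Continuous g) (hg0 : ∀ t, 0 ≤ g t)
    (hWi : IntegrableOn W (Ioc 0 d))
    (Ψ : ℝ → ℝ) (hconv : ConvexOn ℝ (Ici 0) Ψ) (hmono : MonotoneOn Ψ (Ici 0)) (h0 : Ψ 0 = 0)
    (hcont : ContinuousOn Ψ (Ici 0))
    {E : Set ℝ} (hE : MeasurableSet E) (hEsub : E ⊆ Ioc 0 d)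
    (hcomp : ∀ t ∈ E, Ψ (2*d*g t) ≤ W t)
    {r : ℝ} (hr : d ≤ r) {σ : ℝ} (hσ0 : 0 ≤ σ) (hσ : σ * r ≤ ∫ t in E, 2*d*g t) :
    Ψ σ ≤ r⁻¹ * ∫ t in E, W t := by
  have hrpos : 0 < r := lt_of_lt_of_le hd hr
  have hh : Continuous fun t => 2*d*g t := by continuity
  have hh0 : ∀ t, 0 ≤ 2*d*g t := fun t => mul_nonneg (by positivity) (hg0 t)
  have hΨh : Continuous fun t => Ψ (2*d*g t) :=
    hcont.comp_continuous hh fun t => mem_Ici.mpr (hh0 t)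
  have hhi : IntegrableOn (fun t => 2*d*g t) E :=
    (hh.integrableOn_Ioc).mono_set hEsub
  have hΨi : IntegrableOn (fun t => Ψ (2*d*g t)) E :=
    (hΨh.integrableOn_Ioc).mono_set hEsub
  have hint0 : 0 ≤ ∫ t in E, 2*d*g t := setIntegral_nonneg hE fun t _ => hh0 t
  have hvol : volume E ≤ ENNReal.ofReal r := by
    calc volume E ≤ volume (Ioc 0 d) := measure_mono hEsub
    _ = ENNReal.ofReal d := by rw [Real.volume_Ioc, sub_zero]
    _ ≤ ENNReal.ofReal r := ENNReal.ofReal_le_ofReal hr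
  have h1 : Ψ σ ≤ Ψ (r⁻¹ * ∫ t in E, 2*d*g t) := by
    apply hmono (mem_Ici.mpr hσ0) (mem_Ici.mpr (by positivity))
    rw [show r⁻¹ * (∫ t in E, 2*d*g t) = (∫ t in E, 2*d*g t)/r from (div_eq_inv_mul _ _).symm,
      le_div_iff₀ hrpos]
    exact hσ
  have h2 := jensen_musielak hconv h0 hcont hE hrpos hvol hh.measurable hΨh.measurable
    hh0 hhi hΨi
  have h3 : ∫ t in E, Ψ (2*d*g t) ≤ ∫ t in E, W t :=
    setIntegral_mono_on hΨi (hWi.mono_set hEsub) hE hcomp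
  calc Ψ σ ≤ r⁻¹ * ∫ t in E, Ψ (2*d*g t) := h1.trans h2
  _ ≤ r⁻¹ * ∫ t in E, W t := by
    apply mul_le_mul_of_nonneg_left h3 (by positivity)


set_option maxHeartbeats 1000000 in
lemma fiber_bound {n : ℕ}
    (M : (Fin (n+1) → ℝ) → ℝ → ℝ)
    (hMmono : ∀ x, MonotoneOn (M x) (Ici 0))
    (hMconv : ∀ x, ConvexOn ℝ (Ici 0) (M x))
    (hM0 : ∀ x, M x 0 = 0)
    (hMcont : ∀ x, ContinuousOn (M x) (Ici 0))
    (hMmeas : ∀ s, 0 ≤ s → Measurable fun x : Fin (n+1) → ℝ => M x s)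
    (d t₀ : ℝ) (hd : 0 < d) (ht₀ : 0 ≤ t₀)
    (hmono₁ : ∀ t, 0 ≤ t → t ≤ t₀ → ∀ x y : Fin (n+1) → ℝ,
      (∀ i, i ≠ 0 → x i = y i) → x 0 ∈ Icc 0 d → y 0 ∈ Icc 0 d →
      x 0 ≤ y 0 → M y t ≤ M x t)
    (hmono₂ : ∀ t, t₀ < t → ∀ x y : Fin (n+1) → ℝ,
      (∀ i, i ≠ 0 → x i = y i) → x 0 ∈ Icc 0 d → y 0 ∈ Icc 0 d →
      x 0 ≤ y 0 → M x t ≤ M y t)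
    (u : (Fin (n+1) → ℝ) → ℝ) (hu : ContDiff ℝ (⊤ : ℕ∞) u)
    (hvanish : ∀ x : Fin (n+1) → ℝ, x 0 < 0 ∨ d < x 0 → u x = 0 ∧ fderiv ℝ u x = 0)
    (x' : Fin n → ℝ) (x₁ : ℝ) (hx₁ : x₁ ∈ Icc 0 d) :
    ENNReal.ofReal (M (Fin.cons x₁ x' : Fin (n+1) → ℝ) |u (Fin.cons x₁ x' : Fin (n+1) → ℝ)|)
      ≤ ENNReal.ofReal (1/(2*d)) *
        ∫⁻ t in Ioc 0 d,
          ENNReal.ofReal (M (Fin.cons t x' : Fin (n+1) → ℝ)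
            (2*d*|partialDeriv1 u (Fin.cons t x' : Fin (n+1) → ℝ)|)) := by
  classical
  -- basic continuity facts
  have hcons : Continuous fun t : ℝ => (Fin.cons t x' : Fin (n+1) → ℝ) := by
    apply continuous_pi
    intro i
    refine Fin.cases ?_ ?_ i
    · simpa using continuous_id'
    · intro j; simpa using continuous_const
  have hconsm : Measurable fun t : ℝ => (Fin.cons t x' : Fin (n+1) → ℝ) := hcons.measurable
  set D : ℝ → ℝ := fun t => partialDeriv1 u (Fin.cons t x' : Fin (n+1) → ℝ) with hDdef
  have hDcont : Continuous D := by
    have h1 : Continuous fun x : Fin (n+1) → ℝ => fderiv ℝ u x :=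
      (hu.continuous_fderiv (by simp))
    exact (h1.comp hcons).clm_apply continuous_const
  set g : ℝ → ℝ := fun t => |D t| with hgdef
  have hgcont : Continuous g := hDcont.abs
  have hg0 : ∀ t, 0 ≤ g t := fun t => abs_nonneg _
  set v : ℝ → ℝ := fun t => u (Fin.cons t x' : Fin (n+1) → ℝ) with hvdef
  -- derivative of v
  have hline : ∀ t : ℝ, (Fin.cons t x' : Fin (n+1) → ℝ)
      = (Fin.cons 0 x' : Fin (n+1) → ℝ) + t • (Pi.single 0 1 : Fin (n+1) → ℝ) := by
    intro t
    funext i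
    refine Fin.cases ?_ ?_ i
    · simp
    · intro j
      simp [Pi.single_eq_of_ne (Fin.succ_ne_zero j)]
  have hv : ∀ t : ℝ, HasDerivAt v (D t) t := by
    intro t
    have hl : HasDerivAt
        (fun t : ℝ => (Fin.cons 0 x' : Fin (n+1) → ℝ) + t • (Pi.single 0 1 : Fin (n+1) → ℝ))
        (Pi.single 0 1 : Fin (n+1) → ℝ) t := by
      simpa using ((hasDerivAt_id t).smul_const (Pi.single 0 1 : Fin (n+1) → ℝ)).const_add
        (Fin.cons 0 x')
    have hl' : HasDerivAt (fun t : ℝ => (Fin.cons t x' : Fin (n+1) → ℝ))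
        (Pi.single 0 1 : Fin (n+1) → ℝ) t := by
      simpa [← hline] using hl
    have hud : HasFDerivAt u (fderiv ℝ u (Fin.cons t x')) (Fin.cons t x') :=
      ((hu.differentiable (by simp)) (Fin.cons t x')).hasFDerivAt
    exact hud.comp_hasDerivAt t hl'
  have hvz : ∀ t : ℝ, t < 0 ∨ d < t → v t = 0 := by
    intro t ht
    exact (hvanish (Fin.cons t x') (by simpa using ht)).1
  have hDz : ∀ t : ℝ, t < 0 ∨ d < t → D t = 0 := by
    intro t ht
    have := (hvanish (Fin.cons t x') (by simpa using ht)).2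
    simp [hDdef, partialDeriv1, this]
  -- FTC representations
  have hii : ∀ a b : ℝ, IntervalIntegrable D volume a b := fun a b =>
    hDcont.intervalIntegrable a b
  have hftc : ∀ a b : ℝ, ∫ t in a..b, D t = v b - v a := fun a b =>
    intervalIntegral.integral_eq_sub_of_hasDerivAt (fun t _ => hv t) (hii a b)
  have hleft : v x₁ = ∫ t in Ioc 0 x₁, D t := by
    have h1 : ∫ t in (-1:ℝ)..x₁, D t = v x₁ := by
      rw [hftc, hvz (-1) (Or.inl (by norm_num)), sub_zero]
    have h2 : ∫ t in (-1:ℝ)..0, D t = 0 := by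
      rw [intervalIntegral.integral_of_le (by norm_num)]
      apply setIntegral_eq_zero_of_ae_eq_zero
      filter_upwards [compl_mem_ae_iff.mpr (Real.volume_singleton (a := (0:ℝ)))] with t ht
      intro htm
      rcases lt_or_eq_of_le htm.2 with h | h
      · exact hDz t (Or.inl h)
      · exact absurd h ht
    have h3 := intervalIntegral.integral_add_adjacent_intervals (hii (-1) 0) (hii 0 x₁)
    rw [h2, zero_add] at h3
    rw [← h1, ← h3, intervalIntegral.integral_of_le hx₁.1]
  have hright : v x₁ = -∫ t in Ioc x₁ d, D t := by
    have h1 : ∫ t in x₁..(d+1), D t = -v x₁ := by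
      rw [hftc, hvz (d+1) (Or.inr (by norm_num)), zero_sub]
    have h2 : ∫ t in d..(d+1), D t = 0 := by
      rw [intervalIntegral.integral_of_le (by norm_num)]
      apply setIntegral_eq_zero_of_ae_eq_zero
      filter_upwards with t
      intro htm
      exact hDz t (Or.inr htm.1)
    have h3 := intervalIntegral.integral_add_adjacent_intervals (hii x₁ d) (hii d (d+1))
    rw [h2, add_zero] at h3
    rw [← intervalIntegral.integral_of_le hx₁.2, h3, h1, neg_neg]
  -- the point x and the function W
  set x : Fin (n+1) → ℝ := Fin.cons x₁ x' with hxdef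
  set W : ℝ → ℝ := fun t => M (Fin.cons t x' : Fin (n+1) → ℝ) (2*d*g t) with hWdef
  have h2dg0 : ∀ t, 0 ≤ 2*d*g t := fun t => mul_nonneg (by positivity) (hg0 t)
  have hW0 : ∀ t, 0 ≤ W t := fun t => phi_nonneg (hMmono _) (hM0 _) (h2dg0 t)
  have hWmeas : Measurable W := by
    apply measurable_comp_right (fun t s => M (Fin.cons t x' : Fin (n+1) → ℝ) s)
    · intro s hs; exact (hMmeas s hs).comp hconsm
    · intro t; exact hMcont _
    · exact (continuous_const.mul hgcont).measurable
    · exact h2dg0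
  have hSiff : |u x| = |v x₁| := rfl
  -- reduce to the real inequality
  by_cases hK : (∫⁻ t in Ioc 0 d, ENNReal.ofReal (W t)) = ⊤
  · rw [hK, ENNReal.mul_top (by simp [ENNReal.ofReal_eq_zero]; positivity)]
    exact le_top
  have hWi : IntegrableOn W (Ioc 0 d) := by
    refine ⟨hWmeas.aestronglyMeasurable, ?_⟩
    rw [hasFiniteIntegral_iff_ofReal (Eventually.of_forall fun t => hW0 t)]
    exact lt_top_iff_ne_top.mpr hK
  have hKeq : (∫⁻ t in Ioc 0 d, ENNReal.ofReal (W t))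
      = ENNReal.ofReal (∫ t in Ioc 0 d, W t) :=
    (ofReal_integral_eq_lintegral_ofReal hWi (Eventually.of_forall fun t => hW0 t)).symm
  rw [hKeq, ← ENNReal.ofReal_mul (by positivity : (0:ℝ) ≤ 1/(2*d))]
  apply ENNReal.ofReal_le_ofReal
  -- now a purely real inequality
  set S : ℝ := |v x₁| with hSdef
  have hS0 : 0 ≤ S := abs_nonneg _
  set A : Set ℝ := {t | 2*d*g t ≤ t₀} with hAdef
  have hAm : MeasurableSet A :=
    measurableSet_le (continuous_const.mul hgcont).measurable measurable_const
  set Ea1 : Set ℝ := Ioc 0 x₁ ∩ A with hEa1def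
  set Eb1 : Set ℝ := Ioc 0 x₁ \ A with hEb1def
  set Ea2 : Set ℝ := Ioc x₁ d ∩ A with hEa2def
  set Eb2 : Set ℝ := Ioc x₁ d \ A with hEb2def
  set B : Set ℝ := Ioc 0 d \ A with hBdef
  have hEa1m : MeasurableSet Ea1 := measurableSet_Ioc.inter hAm
  have hEb1m : MeasurableSet Eb1 := measurableSet_Ioc.diff hAm
  have hEa2m : MeasurableSet Ea2 := measurableSet_Ioc.inter hAm
  have hEb2m : MeasurableSet Eb2 := measurableSet_Ioc.diff hAm
  have hBm : MeasurableSet B := measurableSet_Ioc.diff hAm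
  have hIocL : Ioc 0 x₁ ⊆ Ioc 0 d := Ioc_subset_Ioc le_rfl hx₁.2
  have hIocR : Ioc x₁ d ⊆ Ioc 0 d := Ioc_subset_Ioc hx₁.1 le_rfl
  have hEa1sub : Ea1 ⊆ Ioc 0 d := (inter_subset_left).trans hIocL
  have hEb1sub : Eb1 ⊆ Ioc 0 d := (diff_subset).trans hIocL
  have hEa2sub : Ea2 ⊆ Ioc 0 d := (inter_subset_left).trans hIocR
  have hEb2sub : Eb2 ⊆ Ioc 0 d := (diff_subset).trans hIocR
  have hBsub : B ⊆ Ioc 0 d := diff_subset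
  have hBeq : Eb1 ∪ Eb2 = B := by
    rw [hEb1def, hEb2def, hBdef, ← union_diff_distrib, Ioc_union_Ioc_eq_Ioc hx₁.1 hx₁.2]
  -- the four partial integrals of g
  have hgi : IntegrableOn g (Ioc 0 d) := hgcont.integrableOn_Ioc
  set a₁ : ℝ := ∫ t in Ea1, g t with ha₁def
  set b₁ : ℝ := ∫ t in Eb1, g t with hb₁def
  set a₂ : ℝ := ∫ t in Ea2, g t with ha₂def
  set b₂ : ℝ := ∫ t in Eb2, g t with hb₂def
  have ha₁0 : 0 ≤ a₁ := setIntegral_nonneg hEa1m fun t _ => hg0 t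
  have hb₁0 : 0 ≤ b₁ := setIntegral_nonneg hEb1m fun t _ => hg0 t
  have ha₂0 : 0 ≤ a₂ := setIntegral_nonneg hEa2m fun t _ => hg0 t
  have hb₂0 : 0 ≤ b₂ := setIntegral_nonneg hEb2m fun t _ => hg0 t
  -- S is dominated by the one-sided integrals
  have habs : ∀ s : Set ℝ, |∫ t in s, D t| ≤ ∫ t in s, g t := fun s => by
    simpa [hgdef, Real.norm_eq_abs] using
      norm_integral_le_integral_norm (f := D) (μ := volume.restrict s)
  have hS1 : S ≤ a₁ + b₁ := by
    have h1 := habs (Ioc 0 x₁)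
    rw [← hleft] at h1
    have h2 : a₁ + b₁ = ∫ t in Ioc 0 x₁, g t :=
      integral_inter_add_diff hAm (hgi.mono_set hIocL)
    rw [hSdef, h2]
    exact h1
  have hS2 : S ≤ a₂ + b₂ := by
    have h1 := habs (Ioc x₁ d)
    rw [show ∫ t in Ioc x₁ d, D t = -(v x₁) by rw [hright]; ring, abs_neg] at h1
    have h2 : a₂ + b₂ = ∫ t in Ioc x₁ d, g t :=
      integral_inter_add_diff hAm (hgi.mono_set hIocR)
    rw [hSdef, h2]
    exact h1
  -- the small-slope integrals are at most t₀/2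
  have hat : ∀ s : Set ℝ, MeasurableSet s → s ⊆ Ioc 0 d →
      (∫ t in s ∩ A, g t) ≤ t₀/2 := by
    intro s hsm hssub
    have hconst : IntegrableOn (fun _ : ℝ => t₀/(2*d)) (s ∩ A) := by
      apply (integrableOn_const_iff (by finiteness)).mpr
      right
      exact lt_of_le_of_lt (measure_mono ((inter_subset_left).trans hssub))
        (by rw [Real.volume_Ioc]; exact ofReal_lt_top)
    have h1 : (∫ t in s ∩ A, g t) ≤ ∫ t in s ∩ A, t₀/(2*d) := by
      apply setIntegral_mono_on (hgi.mono_set ((inter_subset_left).trans hssub)) hconst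
        (hsm.inter hAm)
      intro t ht
      have h2 : 2*d*g t ≤ t₀ := ht.2
      rw [le_div_iff₀ (by positivity)]
      nlinarith [hg0 t]
    have h2 : ∫ t in s ∩ A, (t₀/(2*d) : ℝ) = (volume (s ∩ A)).toReal * (t₀/(2*d)) := by
      rw [setIntegral_const, smul_eq_mul, measureReal_def]
    have h3 : (volume (s ∩ A)).toReal ≤ d := by
      have h := measure_mono (μ := volume) ((inter_subset_left (t := A)).trans hssub)
      rw [Real.volume_Ioc, sub_zero] at h
      exact ENNReal.toReal_le_of_le_ofReal hd.le h
    calc (∫ t in s ∩ A, g t) ≤ (volume (s ∩ A)).toReal * (t₀/(2*d)) := by rw [← h2]; exact h1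
    _ ≤ d * (t₀/(2*d)) := by
        apply mul_le_mul_of_nonneg_right h3 (by positivity)
    _ = t₀/2 := by field_simp
  have ha₁t : a₁ ≤ t₀/2 := hat (Ioc 0 x₁) measurableSet_Ioc hIocL
  have ha₂t : a₂ ≤ t₀/2 := hat (Ioc x₁ d) measurableSet_Ioc hIocR
  -- comparison facts
  have hoff : ∀ t : ℝ, ∀ i : Fin (n+1), i ≠ 0 →
      (Fin.cons t x' : Fin (n+1) → ℝ) i = x i := by
    intro t i hi
    rcases Fin.eq_succ_of_ne_zero hi with ⟨j, rfl⟩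
    simp [hxdef]
  have hx0mem : x 0 ∈ Icc (0:ℝ) d := by simpa [hxdef] using hx₁
  have hPmem : ∀ t ∈ Ioc (0:ℝ) d, (Fin.cons t x' : Fin (n+1) → ℝ) 0 ∈ Icc (0:ℝ) d := by
    intro t ht
    simpa using ⟨ht.1.le, ht.2⟩
  have hC1 : ∀ t ∈ Ea1, M x (2*d*g t) ≤ W t := by
    intro t ht
    exact hmono₁ (2*d*g t) (h2dg0 t) ht.2 (Fin.cons t x') x
      (hoff t) (hPmem t (hEa1sub ht)) hx0mem (by simpa [hxdef] using ht.1.2)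
  have hC2 : ∀ t ∈ Eb2, M x (2*d*g t) ≤ W t := by
    intro t ht
    exact hmono₂ (2*d*g t) (lt_of_not_ge ht.2) x (Fin.cons t x')
      (fun i hi => (hoff t i hi).symm) hx0mem (hPmem t (hEb2sub ht))
      (by simpa [hxdef] using ht.1.1.le)
  have hoff0 : ∀ t : ℝ, ∀ i : Fin (n+1), i ≠ 0 →
      (Fin.cons 0 x' : Fin (n+1) → ℝ) i = (Fin.cons t x' : Fin (n+1) → ℝ) i := by
    intro t i hi
    rcases Fin.eq_succ_of_ne_zero hi with ⟨j, rfl⟩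
    simp
  have h0mem : (Fin.cons 0 x' : Fin (n+1) → ℝ) 0 ∈ Icc (0:ℝ) d := by
    simpa using hd.le
  have hC5 : ∀ t ∈ B, M (Fin.cons 0 x' : Fin (n+1) → ℝ) (2*d*g t) ≤ W t := by
    intro t ht
    exact hmono₂ (2*d*g t) (lt_of_not_ge ht.2) (Fin.cons 0 x') (Fin.cons t x')
      (hoff0 t) h0mem (hPmem t (hBsub ht)) (by simpa using (hBsub ht).1.le)
  have hC3 : ∀ σ : ℝ, 0 ≤ σ → σ ≤ t₀ → M x σ ≤ M (Fin.cons 0 x' : Fin (n+1) → ℝ) σ := by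
    intro σ hσ0 hσt
    exact hmono₁ σ hσ0 hσt (Fin.cons 0 x') x
      (hoff 0)
      h0mem hx0mem (by simpa [hxdef] using hx₁.1)
  -- convexity splitting
  have hΦsplit : ∀ α β : ℝ, 0 ≤ α → 0 ≤ β →
      M x (α + β) ≤ (1/2) * M x (2*α) + (1/2) * M x (2*β) := by
    intro α β hα hβ
    have h := (hMconv x).2 (mem_Ici.mpr (by positivity : (0:ℝ) ≤ 2*α))
      (mem_Ici.mpr (by positivity : (0:ℝ) ≤ 2*β))
      (by norm_num : (0:ℝ) ≤ 1/2) (by norm_num : (0:ℝ) ≤ 1/2) (by norm_num)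
    have harg : (1/2 : ℝ) • (2*α) + (1/2 : ℝ) • (2*β) = α + β := by
      rw [smul_eq_mul, smul_eq_mul]; ring
    rw [harg] at h
    simpa [smul_eq_mul] using h
  -- ∫ 2dg over a set
  have h2dgint : ∀ s : Set ℝ, (∫ t in s, 2*d*g t) = 2*d*(∫ t in s, g t) := by
    intro s
    rw [← integral_const_mul]
  -- the key Jensen instances
  have hkey := key_jensen d hd hgcont hg0 hWi
  -- sums of JM over disjoint subsets
  have hJMnn : ∀ E : Set ℝ, MeasurableSet E → 0 ≤ ∫ t in E, W t := fun E hE =>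
    setIntegral_nonneg hE fun t _ => hW0 t
  have hJMle : ∀ E : Set ℝ, E ⊆ Ioc 0 d →
      (∫ t in E, W t) ≤ ∫ t in Ioc 0 d, W t := by
    intro E hEsub
    apply setIntegral_mono_set hWi (Eventually.of_forall fun t => hW0 t)
      (HasSubset.Subset.eventuallyLE hEsub)
  have hJMsum : ∀ E₁ E₂ : Set ℝ, MeasurableSet E₁ → MeasurableSet E₂ → Disjoint E₁ E₂ →
      E₁ ⊆ Ioc 0 d → E₂ ⊆ Ioc 0 d →
      (∫ t in E₁, W t) + (∫ t in E₂, W t) ≤ ∫ t in Ioc 0 d, W t := by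
    intro E₁ E₂ h₁ h₂ hdisj hs₁ hs₂
    rw [← setIntegral_union hdisj h₂ (hWi.mono_set hs₁) (hWi.mono_set hs₂)]
    exact hJMle _ (union_subset hs₁ hs₂)
  have hdisj1 : Disjoint Ea1 Eb1 := Set.disjoint_left.mpr fun t ht hts => hts.2 ht.2
  have hdisj2 : Disjoint Eb2 Eb1 := Set.disjoint_left.mpr fun t ht hts => by
    exact absurd hts.1.2 (not_le.mpr ht.1.1)
  have hdisj3 : Disjoint Eb2 Ea1 := Set.disjoint_left.mpr fun t ht hts => ht.2 hts.2
  -- final inequality, by case analysis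
  show M x S ≤ 1/(2*d) * ∫ t in Ioc 0 d, W t
  rw [show (1/(2*d) : ℝ) = (2*d)⁻¹ by rw [one_div]]
  rcases le_or_gt S t₀ with hcase | hcase
  · -- Case I : S ≤ t₀
    rcases le_or_gt S a₁ with hI1 | hI2
    · -- I1 : S ≤ a₁
      have h := hkey (M x) (hMconv x) (hMmono x) (hM0 x) (hMcont x) hEa1m hEa1sub hC1
        (le_of_lt (by linarith : d < 2*d)) hS0
        (by rw [h2dgint]; nlinarith)
      exact h.trans (mul_le_mul_of_nonneg_left (hJMle _ hEa1sub) (by positivity))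
    · -- I2 : a₁ < S
      set β : ℝ := S - a₁ with hβdef
      have hβ0 : 0 < β := by simp [hβdef]; linarith
      have hβb₁ : β ≤ b₁ := by simp [hβdef]; linarith
      rcases le_or_gt (2*β) t₀ with hI2a | hI2b
      · -- I2a : 2β ≤ t₀, split between Ea1 and Eb1
        have h1 : M x (2*a₁) ≤ d⁻¹ * ∫ t in Ea1, W t :=
          hkey (M x) (hMconv x) (hMmono x) (hM0 x) (hMcont x) hEa1m hEa1sub hC1
            le_rfl (by positivity) (by rw [h2dgint]; nlinarith)
        have h2 : M x (2*β) ≤ d⁻¹ * ∫ t in Eb1, W t := by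
          have h2' : M (Fin.cons 0 x' : Fin (n+1) → ℝ) (2*β) ≤ d⁻¹ * ∫ t in Eb1, W t :=
            hkey (M (Fin.cons 0 x')) (hMconv _) (hMmono _) (hM0 _) (hMcont _) hEb1m hEb1sub
              (fun t ht => hC5 t (hBeq ▸ Or.inl ht))
              le_rfl (by positivity) (by rw [h2dgint]; nlinarith)
          exact (hC3 (2*β) (by positivity) hI2a).trans h2'
        have hsum := hJMsum Ea1 Eb1 hEa1m hEb1m hdisj1 hEa1sub hEb1sub
        have hS' : M x S ≤ M x (a₁ + β) := by
          apply hMmono x (mem_Ici.mpr hS0) (mem_Ici.mpr (by linarith))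
          simp [hβdef]
        calc M x S ≤ (1/2) * M x (2*a₁) + (1/2) * M x (2*β) :=
              hS'.trans (hΦsplit a₁ β ha₁0 hβ0.le)
        _ ≤ (1/2) * (d⁻¹ * ∫ t in Ea1, W t) + (1/2) * (d⁻¹ * ∫ t in Eb1, W t) := by
              apply add_le_add
              · exact mul_le_mul_of_nonneg_left h1 (by norm_num)
              · exact mul_le_mul_of_nonneg_left h2 (by norm_num)
        _ = (2*d)⁻¹ * ((∫ t in Ea1, W t) + ∫ t in Eb1, W t) := by
              field_simp
              try ring
        _ ≤ (2*d)⁻¹ * ∫ t in Ioc 0 d, W t :=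
              mul_le_mul_of_nonneg_left hsum (by positivity)
      · -- I2b : t₀ < 2β  ⇒  S ≤ ∫_B g ; use M₀ over B
        have hSB : S ≤ b₁ + b₂ := by linarith
        have hBint : (∫ t in B, g t) = b₁ + b₂ := by
          rw [← hBeq, setIntegral_union
            (Set.disjoint_left.mpr fun t ht hts => absurd ht.1.2 (not_le.mpr hts.1.1))
            hEb2m (hgi.mono_set hEb1sub) (hgi.mono_set hEb2sub)]
        have h1 : M (Fin.cons 0 x' : Fin (n+1) → ℝ) S ≤ (2*d)⁻¹ * ∫ t in B, W t :=
          hkey (M (Fin.cons 0 x')) (hMconv _) (hMmono _) (hM0 _) (hMcont _) hBm hBsub hC5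
            (le_of_lt (by linarith : d < 2*d)) hS0
            (by rw [h2dgint, hBint]; nlinarith)
        exact ((hC3 S hS0 hcase).trans h1).trans
          (mul_le_mul_of_nonneg_left (hJMle _ hBsub) (by positivity))
  · -- Case II : t₀ < S
    rcases le_or_gt S b₂ with hII1 | hII2
    · -- II1 : S ≤ b₂
      have h := hkey (M x) (hMconv x) (hMmono x) (hM0 x) (hMcont x) hEb2m hEb2sub hC2
        (le_of_lt (by linarith : d < 2*d)) hS0
        (by rw [h2dgint]; nlinarith)
      exact h.trans (mul_le_mul_of_nonneg_left (hJMle _ hEb2sub) (by positivity))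
    · -- II2 : b₂ < S
      set β : ℝ := S - b₂ with hβdef
      have hβ0 : 0 < β := by simp [hβdef]; linarith
      have hβa₂ : β ≤ a₂ := by simp [hβdef]; linarith
      have h2βt₀ : 2*β ≤ t₀ := by linarith
      have h1 : M x (2*b₂) ≤ d⁻¹ * ∫ t in Eb2, W t :=
        hkey (M x) (hMconv x) (hMmono x) (hM0 x) (hMcont x) hEb2m hEb2sub hC2
          le_rfl (by positivity) (by rw [h2dgint]; nlinarith)
      have hS' : M x S ≤ M x (b₂ + β) := by
        apply hMmono x (mem_Ici.mpr hS0) (mem_Ici.mpr (by linarith))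
        simp [hβdef]
      rcases le_or_gt β b₁ with hIIa | hIIb
      · -- II2a : β ≤ b₁, split between Eb2 and Eb1
        have h2 : M x (2*β) ≤ d⁻¹ * ∫ t in Eb1, W t := by
          have h2' : M (Fin.cons 0 x' : Fin (n+1) → ℝ) (2*β) ≤ d⁻¹ * ∫ t in Eb1, W t :=
            hkey (M (Fin.cons 0 x')) (hMconv _) (hMmono _) (hM0 _) (hMcont _) hEb1m hEb1sub
              (fun t ht => hC5 t (hBeq ▸ Or.inl ht))
              le_rfl (by positivity) (by rw [h2dgint]; nlinarith)
          exact (hC3 (2*β) (by positivity) h2βt₀).trans h2'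
        have hsum := hJMsum Eb2 Eb1 hEb2m hEb1m hdisj2 hEb2sub hEb1sub
        calc M x S ≤ (1/2) * M x (2*b₂) + (1/2) * M x (2*β) :=
              hS'.trans (hΦsplit b₂ β hb₂0 hβ0.le)
        _ ≤ (1/2) * (d⁻¹ * ∫ t in Eb2, W t) + (1/2) * (d⁻¹ * ∫ t in Eb1, W t) := by
              apply add_le_add
              · exact mul_le_mul_of_nonneg_left h1 (by norm_num)
              · exact mul_le_mul_of_nonneg_left h2 (by norm_num)
        _ = (2*d)⁻¹ * ((∫ t in Eb2, W t) + ∫ t in Eb1, W t) := by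
              field_simp
              try ring
        _ ≤ (2*d)⁻¹ * ∫ t in Ioc 0 d, W t :=
              mul_le_mul_of_nonneg_left hsum (by positivity)
      · -- II2b : b₁ < β
        rcases le_or_gt β a₁ with hIIbi | hIIbii
        · -- II2b-i : β ≤ a₁, split between Eb2 and Ea1
          have h2 : M x (2*β) ≤ d⁻¹ * ∫ t in Ea1, W t :=
            hkey (M x) (hMconv x) (hMmono x) (hM0 x) (hMcont x) hEa1m hEa1sub hC1
              le_rfl (by positivity) (by rw [h2dgint]; nlinarith)
          have hsum := hJMsum Eb2 Ea1 hEb2m hEa1m hdisj3 hEb2sub hEa1sub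
          calc M x S ≤ (1/2) * M x (2*b₂) + (1/2) * M x (2*β) :=
                hS'.trans (hΦsplit b₂ β hb₂0 hβ0.le)
          _ ≤ (1/2) * (d⁻¹ * ∫ t in Eb2, W t) + (1/2) * (d⁻¹ * ∫ t in Ea1, W t) := by
                apply add_le_add
                · exact mul_le_mul_of_nonneg_left h1 (by norm_num)
                · exact mul_le_mul_of_nonneg_left h2 (by norm_num)
          _ = (2*d)⁻¹ * ((∫ t in Eb2, W t) + ∫ t in Ea1, W t) := by
                field_simp
                try ring
          _ ≤ (2*d)⁻¹ * ∫ t in Ioc 0 d, W t :=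
                mul_le_mul_of_nonneg_left hsum (by positivity)
        · -- II2b-ii : a₁ < β, contradiction
          exact absurd hS1 (by nlinarith)
set_option maxHeartbeats 1000000 in
theorem poincare_Y0_down_up {N : ℕ} [NeZero N] (Ω : Set (Fin N → ℝ))
    (hΩo : IsOpen Ω) (hΩb : Bornology.IsBounded Ω) (d : ℝ) (hd : 0 < d)
    (hstrip : ∀ x ∈ Ω, x 0 ∈ Icc 0 d)
    (M : (Fin N → ℝ) → ℝ → ℝ) (hM : IsMusielakPhi M)
    (t₀ : ℝ) (ht₀ : 0 ≤ t₀)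
    (hmono₁ : ∀ t, 0 ≤ t → t ≤ t₀ → ∀ x y : Fin N → ℝ,
      (∀ i, i ≠ 0 → x i = y i) → x 0 ∈ Icc 0 d → y 0 ∈ Icc 0 d →
      x 0 ≤ y 0 → M y t ≤ M x t)
    (hmono₂ : ∀ t, t₀ < t → ∀ x y : Fin N → ℝ,
      (∀ i, i ≠ 0 → x i = y i) → x 0 ∈ Icc 0 d → y 0 ∈ Icc 0 d →
      x 0 ≤ y 0 → M x t ≤ M y t)
    (u : (Fin N → ℝ) → ℝ) (hu : ContDiff ℝ (⊤ : ℕ∞) u) (hcs : HasCompactSupport u)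
    (hsupp : tsupport u ⊆ Ω) :
    ∫⁻ x in Ω, ENNReal.ofReal (M x |u x|) ≤
      (1 / 2 : ℝ≥0∞) *
        ∫⁻ x in Ω, ENNReal.ofReal (M x (2 * d * |partialDeriv1 u x|)) := by
  classical
  obtain ⟨n, rfl⟩ : ∃ n, N = n + 1 :=
    ⟨N - 1, (Nat.succ_pred_eq_of_pos (Nat.pos_of_ne_zero (NeZero.ne N))).symm⟩
  obtain ⟨hMmono, hMconv, hM0, hMpos, hMmeas, hMtop, hMlim0, hMlim⟩ := hM
  have hMcont : ∀ x, ContinuousOn (M x) (Ici 0) := fun x =>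
    phi_continuousOn (hMconv x) (hM0 x) (hMlim0 x)
  -- vanishing of u and its derivative outside Ω
  have hoffsupp : ∀ x : Fin (n+1) → ℝ, x ∉ tsupport u → u x = 0 ∧ fderiv ℝ u x = 0 := by
    intro x hnot
    refine ⟨image_eq_zero_of_notMem_tsupport hnot, ?_⟩
    have hev : u =ᶠ[nhds x] (fun _ => (0:ℝ)) := by
      have hmem : (tsupport u)ᶜ ∈ nhds x := (isClosed_tsupport u).isOpen_compl.mem_nhds hnot
      filter_upwards [hmem] with y hy
      exact image_eq_zero_of_notMem_tsupport hy
    rw [hev.fderiv_eq]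
    exact fderiv_const_apply 0
  have hoffΩ : ∀ x : Fin (n+1) → ℝ, x ∉ Ω → u x = 0 ∧ fderiv ℝ u x = 0 :=
    fun x hx => hoffsupp x fun hmem => hx (hsupp hmem)
  have hvanish : ∀ x : Fin (n+1) → ℝ, x 0 < 0 ∨ d < x 0 → u x = 0 ∧ fderiv ℝ u x = 0 := by
    intro x hx
    apply hoffΩ
    intro hmem
    have h := hstrip x hmem
    rcases hx with h' | h'
    · exact absurd h.1 (not_le.mpr h')
    · exact absurd h.2 (not_le.mpr h')
  -- the two integrands
  set F : (Fin (n+1) → ℝ) → ℝ≥0∞ := fun x => ENNReal.ofReal (M x |u x|) with hFdef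
  set G : (Fin (n+1) → ℝ) → ℝ≥0∞ :=
    fun x => ENNReal.ofReal (M x (2*d*|partialDeriv1 u x|)) with hGdef
  have hum : Measurable u := hu.continuous.measurable
  have hpdc : Continuous (partialDeriv1 u) :=
    (hu.continuous_fderiv (by simp)).clm_apply continuous_const
  have hFm : Measurable F := by
    apply ENNReal.measurable_ofReal.comp
    exact measurable_comp_right M hMmeas hMcont hum.abs fun x => abs_nonneg _
  have hGm : Measurable G := by
    apply ENNReal.measurable_ofReal.comp
    apply measurable_comp_right M hMmeas hMcont
      (measurable_const.mul hpdc.measurable.abs)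
    intro x
    exact mul_nonneg (by positivity) (abs_nonneg _)
  -- product representation of the integrals
  set ψ : (Fin (n+1) → ℝ) ≃ᵐ ℝ × (Fin n → ℝ) :=
    MeasurableEquiv.piFinSuccAbove (fun _ : Fin (n+1) => ℝ) 0 with hψdef
  have hψ : MeasurePreserving ψ := volume_preserving_piFinSuccAbove (fun _ => ℝ) 0
  have hψs : ∀ (t : ℝ) (x' : Fin n → ℝ), ψ.symm (t, x') = Fin.cons t x' := by
    intro t x'
    show (Fin.insertNthEquiv (fun _ : Fin (n+1) => ℝ) 0) (t, x') = Fin.cons t x'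
    simp [Fin.insertNthEquiv, Fin.insertNth_zero']
  have hrep : ∀ H : (Fin (n+1) → ℝ) → ℝ≥0∞, Measurable H →
      (∫⁻ x, H x) = ∫⁻ x' : Fin n → ℝ, ∫⁻ t : ℝ, H (Fin.cons t x') := by
    intro H hH
    have h1 : (∫⁻ p : ℝ × (Fin n → ℝ), H (ψ.symm p)) = ∫⁻ x, H x :=
      (MeasurePreserving.symm ψ hψ).lintegral_comp hH
    have hHm : Measurable fun p : ℝ × (Fin n → ℝ) => H (ψ.symm p) :=
      hH.comp ψ.symm.measurable
    have hHm2 : Measurable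
        (Function.uncurry fun (t : ℝ) (x' : Fin n → ℝ) => H (ψ.symm (t, x'))) := by
      have heq : (Function.uncurry fun (t : ℝ) (x' : Fin n → ℝ) => H (ψ.symm (t, x')))
          = fun p : ℝ × (Fin n → ℝ) => H (ψ.symm p) := by
        funext p
        cases p
        rfl
      rw [heq]
      exact hHm
    rw [← h1, Measure.volume_eq_prod, lintegral_prod _ hHm.aemeasurable,
      lintegral_lintegral_swap hHm2.aemeasurable]
    congr 1
    funext x'
    congr 1
    funext t
    rw [hψs]
  -- the fiberwise bound
  have hfiber : ∀ (x' : Fin n → ℝ) (t : ℝ),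
      F (Fin.cons t x') ≤ (Icc (0:ℝ) d).indicator
        (fun _ => ENNReal.ofReal (1/(2*d)) *
          ∫⁻ s in Ioc 0 d, G (Fin.cons s x')) t := by
    intro x' t
    by_cases ht : t ∈ Icc (0:ℝ) d
    · rw [indicator_of_mem ht]
      exact fiber_bound M hMmono hMconv hM0 hMcont hMmeas d t₀ hd ht₀ hmono₁ hmono₂
        u hu hvanish x' t ht
    · rw [indicator_of_notMem ht]
      have hz : u (Fin.cons t x') = 0 := by
        apply (hvanish (Fin.cons t x') _).1
        simp only [mem_Icc, not_and_or, not_le] at ht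
        simpa using ht
      simp [hFdef, hz, hM0]
  -- assembling
  have hGΩ : ∀ x, x ∉ Ω → G x = 0 := by
    intro x hx
    have h := (hoffΩ x hx).2
    simp [hGdef, partialDeriv1, h, hM0]
  have hGeq : (∫⁻ x, G x) = ∫⁻ x in Ω, G x := by
    rw [← lintegral_indicator hΩo.measurableSet]
    apply lintegral_congr
    intro x
    by_cases hx : x ∈ Ω
    · rw [indicator_of_mem hx]
    · rw [indicator_of_notMem hx, hGΩ x hx]
  have hconst : (ENNReal.ofReal d * ENNReal.ofReal (1/(2*d))) = 1/2 := by
    rw [← ENNReal.ofReal_mul hd.le]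
    rw [show d * (1/(2*d)) = 1/2 by field_simp]
    rw [ENNReal.ofReal_div_of_pos two_pos, ENNReal.ofReal_one, ENNReal.ofReal_ofNat]
  calc ∫⁻ x in Ω, F x ≤ ∫⁻ x, F x := setLIntegral_le_lintegral Ω F
  _ = ∫⁻ x' : Fin n → ℝ, ∫⁻ t : ℝ, F (Fin.cons t x') := hrep F hFm
  _ ≤ ∫⁻ x' : Fin n → ℝ, (ENNReal.ofReal d * (ENNReal.ofReal (1/(2*d)) *
        ∫⁻ s in Ioc 0 d, G (Fin.cons s x'))) := by
      apply lintegral_mono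
      intro x'
      calc (∫⁻ t : ℝ, F (Fin.cons t x'))
          ≤ ∫⁻ t : ℝ, (Icc (0:ℝ) d).indicator
            (fun _ => ENNReal.ofReal (1/(2*d)) * ∫⁻ s in Ioc 0 d, G (Fin.cons s x')) t :=
            lintegral_mono (hfiber x')
      _ = (ENNReal.ofReal (1/(2*d)) * ∫⁻ s in Ioc 0 d, G (Fin.cons s x'))
            * volume (Icc (0:ℝ) d) := lintegral_indicator_const measurableSet_Icc _
      _ = ENNReal.ofReal d * (ENNReal.ofReal (1/(2*d)) * ∫⁻ s in Ioc 0 d, G (Fin.cons s x')) := by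
            rw [Real.volume_Icc, sub_zero, mul_comm]
  _ ≤ ∫⁻ x' : Fin n → ℝ, (ENNReal.ofReal d * (ENNReal.ofReal (1/(2*d)) *
        ∫⁻ s : ℝ, G (Fin.cons s x'))) := by
      apply lintegral_mono
      intro x'
      exact mul_le_mul_right (mul_le_mul_right (setLIntegral_le_lintegral _ _) _) _
  _ = (ENNReal.ofReal d * ENNReal.ofReal (1/(2*d))) *
        ∫⁻ x' : Fin n → ℝ, ∫⁻ s : ℝ, G (Fin.cons s x') := by
      rw [← lintegral_const_mul' _ _ (by finiteness : ENNReal.ofReal d * ENNReal.ofReal (1/(2*d)) ≠ ⊤)]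
      congr 1
      funext x'
      ring
  _ = (1/2 : ℝ≥0∞) * ∫⁻ x in Ω, G x := by
      rw [hconst, ← hrep G hGm, hGeq]
end
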